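/- arXiv:1503.07053 — 12 statements merged into one kernel-verified Lean document; each statement's English description precedes it below -/
import Mathlib

section
/- Let A = diag(a_1,…,a_n) be a real diagonal n×n matrix, κ ∈ ℝ, and let X, P be real n×r matrices satisfying X^T X = I_r and X^T P + P^T X = 0. Define Λ = −X^T A X − P^T P, Ẋ = P − (1+2κ) X P^T X, Ṗ = A X + (1+2κ) P X^T P + X Λ, and let Φ = P X^T − X P^T. Then for every λ ∈ ℝ the derivative of the Lax matrix ℒ(λ) = λΦ + X X^T + λ² A along the flow, namely λ(Ṗ X^T + P Ẋ^T − Ẋ P^T − X Ṗ^T) + (Ẋ X^T + X Ẋ^T), equals the commutator [𝒩(λ), ℒ(λ)], where 𝒩(λ) = Φ + λ A. -/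
/-!
Both sides of the Lax equation are polynomials in `λ`. In the commutator `[Φ + λA, λΦ + XXᵀ + λ²A]`
the terms of degree two and three cancel, leaving `[Φ, XXᵀ] + λ[A, XXᵀ]`. The constant coefficient
of the left side is `ẊXᵀ + XẊᵀ = PXᵀ + XPᵀ`, the `κ`-term being `X(PᵀX + XᵀP)Xᵀ = 0`, and
`XᵀX = 1` turns `[Φ, XXᵀ]` into the same matrix. In the linear coefficient the `κ`-terms cancel
identically and, `Λ` being symmetric, only `[A, XXᵀ]` survives.
-/

open Matrix

theorem commutator_add_smul_pencil {R S : Type*} [CommRing R] [Ring S] [Algebra R S]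
    (Φ A M : S) (t : R) :
    (Φ + t • A) * (t • Φ + M + t ^ 2 • A) - (t • Φ + M + t ^ 2 • A) * (Φ + t • A) =
      (Φ * M - M * Φ) + t • (A * M - M * A) := by
  simp only [add_mul, mul_add, smul_mul_assoc, mul_smul_comm, smul_add]
  module

section Stiefel

variable {R m k : Type*} [CommRing R] [Fintype m] [Fintype k] (X P : Matrix m k R)

theorem flow_mul_transpose_add_of_tangent (c : R) (hXP : Xᵀ * P + Pᵀ * X = 0) :
    (P - c • (X * Pᵀ * X)) * Xᵀ + X * (P - c • (X * Pᵀ * X))ᵀ = P * Xᵀ + X * Pᵀ := by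
  have hκ : X * Pᵀ * X * Xᵀ + X * (X * Pᵀ * X)ᵀ = X * (Xᵀ * P + Pᵀ * X) * Xᵀ := by
    simp only [transpose_mul, transpose_transpose, Matrix.mul_add, Matrix.add_mul,
      Matrix.mul_assoc]
    abel
  rw [hXP, Matrix.mul_zero, Matrix.zero_mul] at hκ
  simp only [Matrix.sub_mul, Matrix.mul_sub, transpose_sub, transpose_smul, Matrix.smul_mul,
    Matrix.mul_smul]
  linear_combination (norm := skip) (-c) • hκ
  module

theorem momentum_commutator_projector [DecidableEq k] (hX : Xᵀ * X = 1)
    (hXP : Xᵀ * P + Pᵀ * X = 0) :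
    (P * Xᵀ - X * Pᵀ) * (X * Xᵀ) - (X * Xᵀ) * (P * Xᵀ - X * Pᵀ) = P * Xᵀ + X * Pᵀ := by
  have hXXP : X * Xᵀ * (X * Pᵀ) = X * Pᵀ := by
    rw [Matrix.mul_assoc, ← Matrix.mul_assoc Xᵀ, hX, Matrix.one_mul]
  have hPXX : P * Xᵀ * (X * Xᵀ) = P * Xᵀ := by
    rw [Matrix.mul_assoc, ← Matrix.mul_assoc Xᵀ, hX, Matrix.one_mul]
  have htangent : X * Pᵀ * (X * Xᵀ) + X * Xᵀ * (P * Xᵀ) = X * (Xᵀ * P + Pᵀ * X) * Xᵀ := by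
    simp only [Matrix.mul_add, Matrix.add_mul, Matrix.mul_assoc]
    abel
  rw [hXP, Matrix.mul_zero, Matrix.zero_mul] at htangent
  rw [Matrix.sub_mul, Matrix.mul_sub, hXXP, hPXX]
  linear_combination (norm := skip) -htangent
  abel

theorem neumann_flow_linear_coeff (A : Matrix m m R) (hA : Aᵀ = A) (Λ : Matrix k k R)
    (hΛ : Λᵀ = Λ) (c : R) :
    (A * X + c • (P * Xᵀ * P) + X * Λ) * Xᵀ + P * (P - c • (X * Pᵀ * X))ᵀ -
        (P - c • (X * Pᵀ * X)) * Pᵀ - X * (A * X + c • (P * Xᵀ * P) + X * Λ)ᵀ =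
      A * (X * Xᵀ) - X * Xᵀ * A := by
  simp only [transpose_add, transpose_sub, transpose_mul, transpose_smul, transpose_transpose,
    hA, hΛ, Matrix.add_mul, Matrix.sub_mul, Matrix.mul_add, Matrix.mul_sub, Matrix.smul_mul,
    Matrix.mul_smul, Matrix.mul_assoc]
  abel

end Stiefel

/-- The 'big' n×n Lax representation of the Neumann systems on the Stiefel
variety `V_{n,r}`: along the Neumann flow with metric parameter `κ`, the
derivative of `ℒ(λ) = λΦ + XXᵀ + λ²A` equals the commutator `[𝒩(λ), ℒ(λ)]`
with `𝒩(λ) = Φ + λA`, for every `λ`. -/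
theorem stmt_0 {n r : ℕ} (a : Fin n → ℝ) (κ : ℝ)
    (A : Matrix (Fin n) (Fin n) ℝ) (hA : A = Matrix.diagonal a)
    (X P : Matrix (Fin n) (Fin r) ℝ)
    (hX : Xᵀ * X = 1) (hXP : Xᵀ * P + Pᵀ * X = 0)
    (Λ : Matrix (Fin r) (Fin r) ℝ) (hΛ : Λ = -(Xᵀ * A * X) - Pᵀ * P)
    (Xd Pd : Matrix (Fin n) (Fin r) ℝ)
    (hXd : Xd = P - (1 + 2 * κ) • (X * Pᵀ * X))
    (hPd : Pd = A * X + (1 + 2 * κ) • (P * Xᵀ * P) + X * Λ)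
    (Φ : Matrix (Fin n) (Fin n) ℝ) (hΦ : Φ = P * Xᵀ - X * Pᵀ) :
    ∀ lam : ℝ,
      lam • (Pd * Xᵀ + P * Xdᵀ - Xd * Pᵀ - X * Pdᵀ) + (Xd * Xᵀ + X * Xdᵀ) =
        (Φ + lam • A) * (lam • Φ + X * Xᵀ + (lam ^ 2) • A) -
          (lam • Φ + X * Xᵀ + (lam ^ 2) • A) * (Φ + lam • A) := by
  intro lam
  have hAT : Aᵀ = A := by rw [hA, diagonal_transpose]
  have hΛT : Λᵀ = Λ := by
    simp only [hΛ, transpose_sub, transpose_neg, transpose_mul, transpose_transpose, hAT,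
      Matrix.mul_assoc]
  have hlin : Pd * Xᵀ + P * Xdᵀ - Xd * Pᵀ - X * Pdᵀ = A * (X * Xᵀ) - X * Xᵀ * A := by
    subst hXd hPd
    exact neumann_flow_linear_coeff X P A hAT Λ hΛT _
  rw [commutator_add_smul_pencil, hlin, hXd, flow_mul_transpose_add_of_tangent X P _ hXP, hΦ,
    momentum_commutator_projector X P hX hXP, add_comm]
end

section
/- Let A = diag(a_1,…,a_n) be a real diagonal n×n matrix, κ ∈ ℝ, and let X, P be real n×r matrices satisfying X^T X = I_r and X^T P + P^T X = 0. Define Λ = −X^T A X − P^T P, Ẋ = P − (1+2κ) X P^T X, Ṗ = A X + (1+2κ) P X^T P + X Λ, and Φ = P X^T − X P^T. Then the derivative of Φ along the flow satisfies Ṗ X^T + P Ẋ^T − Ẋ P^T − X Ṗ^T = −[X X^T, A], and the derivative of X X^T along the flow satisfies Ẋ X^T + X Ẋ^T = [Φ, X X^T]. -/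
open Matrix

/-!
Write `c = 1 + 2κ`. The `c`-terms of `Ṗ Xᵀ` and `P Ẋᵀ` cancel, leaving
`M := Ṗ Xᵀ + P Ẋᵀ = A (X Xᵀ) + (X Λ Xᵀ + P Pᵀ)`, and the derivative of `Φ` is `M − Mᵀ`; since `Λ`
(like `A`) is symmetric only the commutator `[A, X Xᵀ]` survives. For `X Xᵀ`, both sides reduce to
`P Xᵀ + X Pᵀ`: once `Xᵀ X = 1` is used, the remaining terms are multiples of `X (Pᵀ X + Xᵀ P) Xᵀ = 0`.
-/

variable {R : Type*} [CommRing R] {m k : Type*}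

theorem Matrix.isSymm_mul_transpose [Fintype k] (X : Matrix m k R) : (X * Xᵀ).IsSymm := by
  rw [IsSymm, transpose_mul, transpose_transpose]

theorem Matrix.IsSymm.mul_mul_transpose [Fintype k] {S : Matrix k k R} (hS : S.IsSymm)
    (X : Matrix m k R) :
    (X * S * Xᵀ).IsSymm := by
  rw [IsSymm, transpose_mul, transpose_mul, transpose_transpose, hS.eq, Matrix.mul_assoc]

theorem isSymm_neumann_multiplier [Fintype m] {A : Matrix m m R} (hA : A.IsSymm)
    (X P : Matrix m k R) :
    (-(Xᵀ * A * X) - Pᵀ * P).IsSymm := by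
  simpa using (hA.mul_mul_transpose Xᵀ).neg.sub (isSymm_mul_transpose Pᵀ)

theorem neumann_mul_transpose_add_mul_transpose [Fintype m] [Fintype k] (A : Matrix m m R)
    (X P : Matrix m k R) (Λ : Matrix k k R) (c : R) :
    (A * X + c • (P * Xᵀ * P) + X * Λ) * Xᵀ + P * (P - c • (X * Pᵀ * X))ᵀ =
      A * (X * Xᵀ) + (X * Λ * Xᵀ + P * Pᵀ) := by
  simp only [transpose_sub, transpose_smul, transpose_mul, transpose_transpose, Matrix.add_mul,
    Matrix.mul_sub, Matrix.smul_mul, Matrix.mul_smul, Matrix.mul_assoc]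
  abel

theorem mul_transpose_add_sub_transpose [Fintype k] (X P Xd Pd : Matrix m k R) :
    Pd * Xᵀ + P * Xdᵀ - Xd * Pᵀ - X * Pdᵀ =
      (Pd * Xᵀ + P * Xdᵀ) - (Pd * Xᵀ + P * Xdᵀ)ᵀ := by
  simp only [transpose_add, transpose_mul, transpose_transpose]
  abel

theorem neumann_momentum_deriv [Fintype m] [Fintype k] {A : Matrix m m R} (hA : A.IsSymm)
    {Λ : Matrix k k R} (hΛ : Λ.IsSymm) {X P Xd Pd : Matrix m k R} {c : R}
    (hXd : Xd = P - c • (X * Pᵀ * X)) (hPd : Pd = A * X + c • (P * Xᵀ * P) + X * Λ) :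
    Pd * Xᵀ + P * Xdᵀ - Xd * Pᵀ - X * Pdᵀ = -((X * Xᵀ) * A - A * (X * Xᵀ)) := by
  have hS : (X * Λ * Xᵀ + P * Pᵀ).IsSymm :=
    (hΛ.mul_mul_transpose X).add (isSymm_mul_transpose P)
  rw [mul_transpose_add_sub_transpose, hXd, hPd, neumann_mul_transpose_add_mul_transpose,
    transpose_add, hS.eq, transpose_mul, hA.eq, (isSymm_mul_transpose X).eq]
  abel

theorem stiefel_sandwich_eq_zero [Fintype m] [Fintype k] {X P : Matrix m k R}
    (hXP : Xᵀ * P + Pᵀ * X = 0) :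
    X * Pᵀ * X * Xᵀ + X * Xᵀ * P * Xᵀ = 0 := by
  have h : X * (Pᵀ * X + Xᵀ * P) * Xᵀ = 0 := by
    rw [add_comm, hXP, Matrix.mul_zero, Matrix.zero_mul]
  simpa only [Matrix.mul_add, Matrix.add_mul, Matrix.mul_assoc] using h

theorem neumann_position_deriv [Fintype m] [Fintype k] {X P Xd : Matrix m k R} {c : R}
    (hXP : Xᵀ * P + Pᵀ * X = 0) (hXd : Xd = P - c • (X * Pᵀ * X)) :
    Xd * Xᵀ + X * Xdᵀ = P * Xᵀ + X * Pᵀ :=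
  calc Xd * Xᵀ + X * Xdᵀ = P * Xᵀ + X * Pᵀ - c • (X * Pᵀ * X * Xᵀ + X * Xᵀ * P * Xᵀ) := by
        simp only [hXd, transpose_sub, transpose_smul, transpose_mul, transpose_transpose,
          Matrix.sub_mul, Matrix.mul_sub, Matrix.smul_mul, Matrix.mul_smul, smul_add,
          Matrix.mul_assoc]
        abel
    _ = P * Xᵀ + X * Pᵀ := by rw [stiefel_sandwich_eq_zero hXP, smul_zero, sub_zero]

theorem commutator_momentum_stiefel [Fintype m] [Fintype k] [DecidableEq k] {X P : Matrix m k R}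
    (hX : Xᵀ * X = 1) (hXP : Xᵀ * P + Pᵀ * X = 0) :
    (P * Xᵀ - X * Pᵀ) * (X * Xᵀ) - (X * Xᵀ) * (P * Xᵀ - X * Pᵀ) = P * Xᵀ + X * Pᵀ := by
  have hXXX : X * Xᵀ * X * Pᵀ = X * Pᵀ := by rw [Matrix.mul_assoc X Xᵀ, hX, Matrix.mul_one]
  have hPXX : P * Xᵀ * X * Xᵀ = P * Xᵀ := by rw [Matrix.mul_assoc P Xᵀ, hX, Matrix.mul_one]
  calc (P * Xᵀ - X * Pᵀ) * (X * Xᵀ) - (X * Xᵀ) * (P * Xᵀ - X * Pᵀ)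
      = P * Xᵀ + X * Pᵀ - (X * Pᵀ * X * Xᵀ + X * Xᵀ * P * Xᵀ) := by
        simp only [Matrix.sub_mul, Matrix.mul_sub, ← Matrix.mul_assoc, hXXX, hPXX]
        abel
    _ = P * Xᵀ + X * Pᵀ := by rw [stiefel_sandwich_eq_zero hXP, sub_zero]

/-- Along the Neumann flow on the Stiefel variety, the SO(n)-momentum
`Φ = PXᵀ − XPᵀ` satisfies `Φ̇ = −[XXᵀ, A]` and the symmetric matrix `XXᵀ`
satisfies `(XXᵀ)˙ = [Φ, XXᵀ]`. -/
theorem stmt_1 {n r : ℕ} (a : Fin n → ℝ) (κ : ℝ)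
    (A : Matrix (Fin n) (Fin n) ℝ) (hA : A = Matrix.diagonal a)
    (X P : Matrix (Fin n) (Fin r) ℝ)
    (hX : Xᵀ * X = 1) (hXP : Xᵀ * P + Pᵀ * X = 0)
    (Λ : Matrix (Fin r) (Fin r) ℝ) (hΛ : Λ = -(Xᵀ * A * X) - Pᵀ * P)
    (Xd Pd : Matrix (Fin n) (Fin r) ℝ)
    (hXd : Xd = P - (1 + 2 * κ) • (X * Pᵀ * X))
    (hPd : Pd = A * X + (1 + 2 * κ) • (P * Xᵀ * P) + X * Λ)
    (Φ : Matrix (Fin n) (Fin n) ℝ) (hΦ : Φ = P * Xᵀ - X * Pᵀ) :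
    Pd * Xᵀ + P * Xdᵀ - Xd * Pᵀ - X * Pdᵀ =
        -((X * Xᵀ) * A - A * (X * Xᵀ)) ∧
      Xd * Xᵀ + X * Xdᵀ = Φ * (X * Xᵀ) - (X * Xᵀ) * Φ := by
  subst hA hΦ
  have hAsymm := isSymm_diagonal a
  exact ⟨neumann_momentum_deriv hAsymm (hΛ ▸ isSymm_neumann_multiplier hAsymm X P) hXd hPd,
    (neumann_position_deriv hXP hXd).trans (commutator_momentum_stiefel hX hXP).symm⟩
end

section
/- Let A = diag(a_1,…,a_n) be a real diagonal n×n matrix, κ ∈ ℝ, and let X, P be real n×r matrices satisfying X^T X = I_r and X^T P + P^T X = 0. Define Λ = −X^T A X − P^T P, Ẋ = P − (1+2κ) X P^T X, Ṗ = A X + (1+2κ) P X^T P + X Λ. Then X^T Ẋ + Ẋ^T X = 0 and Ẋ^T P + X^T Ṗ = 0; in particular, the constraints X^T X = I_r, X^T P + P^T X = 0 and the SO(r)-momentum Ψ = X^T P − P^T X are preserved (have zero derivative) along the Neumann flow. -/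
/-!
Write `S = XᵀP`, so the second constraint says `S` is skew. Using `XᵀX = 1`, the velocity
`Ẋ = P − c X PᵀX` gives `XᵀẊ = S − c Sᵀ`, whose symmetric part is `(1 − c)(S + Sᵀ) = 0`.
Likewise `ẊᵀP + XᵀṖ = PᵀP + XᵀAX + Λ`, the `c SS` terms cancelling, and this vanishes by the
choice of `Λ`. The remaining two identities are the sum and difference of `ẊᵀP + XᵀṖ` with its
transpose `ṖᵀX + PᵀẊ`.
-/

open Matrix

section NeumannFlow

variable {m n R : Type*} [Fintype m] [Fintype n] [DecidableEq m] [CommRing R]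

-- `c` stands for `1 + 2κ`.
def neumannVelocity (c : R) (X P : Matrix n m R) : Matrix n m R :=
  P - c • (X * Pᵀ * X)

def neumannMultiplier (A : Matrix n n R) (X P : Matrix n m R) : Matrix m m R :=
  -(Xᵀ * A * X) - Pᵀ * P

def neumannForce (A : Matrix n n R) (c : R) (X P : Matrix n m R) : Matrix n m R :=
  A * X + c • (P * Xᵀ * P) + X * neumannMultiplier A X P

theorem transpose_mul_mul_cancel {X : Matrix n m R} (hX : Xᵀ * X = 1) (M : Matrix m m R) :
    Xᵀ * (X * M) = M := by
  rw [← Matrix.mul_assoc, hX, Matrix.one_mul]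

theorem transpose_mul_neumannVelocity {X : Matrix n m R} (hX : Xᵀ * X = 1)
    (P : Matrix n m R) (c : R) :
    Xᵀ * neumannVelocity c X P = Xᵀ * P - c • (Xᵀ * P)ᵀ := by
  rw [neumannVelocity, Matrix.mul_sub, Matrix.mul_smul, Matrix.mul_assoc,
    transpose_mul_mul_cancel hX, transpose_mul, transpose_transpose]

theorem neumannVelocity_tangent {X P : Matrix n m R} (hX : Xᵀ * X = 1)
    (hXP : Xᵀ * P + Pᵀ * X = 0) (c : R) :
    Xᵀ * neumannVelocity c X P + (neumannVelocity c X P)ᵀ * X = 0 := by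
  have hskew : (Xᵀ * P)ᵀ = -(Xᵀ * P) := by
    rw [transpose_mul, transpose_transpose]
    exact eq_neg_of_add_eq_zero_right hXP
  have hsym : (neumannVelocity c X P)ᵀ * X = (Xᵀ * neumannVelocity c X P)ᵀ := by
    rw [transpose_mul, transpose_transpose]
  rw [hsym, transpose_mul_neumannVelocity hX, transpose_sub, transpose_smul, transpose_transpose,
    hskew]
  module

theorem neumannVelocity_transpose_mul_add_transpose_mul_neumannForce_eq_zero
    {X : Matrix n m R} (hX : Xᵀ * X = 1) (A : Matrix n n R) (P : Matrix n m R) (c : R) :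
    (neumannVelocity c X P)ᵀ * P + Xᵀ * neumannForce A c X P = 0 := by
  simp only [neumannVelocity, neumannForce, neumannMultiplier, transpose_sub, transpose_smul,
    transpose_mul, transpose_transpose, Matrix.sub_mul, Matrix.mul_add, Matrix.smul_mul,
    Matrix.mul_smul, Matrix.mul_assoc, transpose_mul_mul_cancel hX]
  abel

end NeumannFlow

theorem stmt_2_general {n r : ℕ} (κ : ℝ)
    (A : Matrix (Fin n) (Fin n) ℝ)
    (X P : Matrix (Fin n) (Fin r) ℝ)
    (hX : Xᵀ * X = 1) (hXP : Xᵀ * P + Pᵀ * X = 0)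
    (Λ : Matrix (Fin r) (Fin r) ℝ) (hΛ : Λ = -(Xᵀ * A * X) - Pᵀ * P)
    (Xd Pd : Matrix (Fin n) (Fin r) ℝ)
    (hXd : Xd = P - (1 + 2 * κ) • (X * Pᵀ * X))
    (hPd : Pd = A * X + (1 + 2 * κ) • (P * Xᵀ * P) + X * Λ) :
    Xᵀ * Xd + Xdᵀ * X = 0 ∧
      Xdᵀ * P + Xᵀ * Pd = 0 ∧
      (Xdᵀ * P + Xᵀ * Pd) + (Pdᵀ * X + Pᵀ * Xd) = 0 ∧
      (Xdᵀ * P + Xᵀ * Pd) - (Pdᵀ * X + Pᵀ * Xd) = 0 := by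
  have hXd' : Xd = neumannVelocity (1 + 2 * κ) X P := hXd
  have hPd' : Pd = neumannForce A (1 + 2 * κ) X P := by rw [hPd, hΛ]; rfl
  have hmomentum : Xdᵀ * P + Xᵀ * Pd = 0 := by
    rw [hXd', hPd']
    exact neumannVelocity_transpose_mul_add_transpose_mul_neumannForce_eq_zero hX A P _
  have htranspose : Pdᵀ * X + Pᵀ * Xd = (Xdᵀ * P + Xᵀ * Pd)ᵀ := by
    rw [transpose_add, transpose_mul, transpose_mul, transpose_transpose, transpose_transpose,
      add_comm]
  refine ⟨hXd' ▸ neumannVelocity_tangent hX hXP _, hmomentum, ?_, ?_⟩ <;>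
    rw [htranspose, hmomentum, transpose_zero] <;> simp

/-- The Neumann flow on `T*V_{n,r}` is tangent to the constraint manifold
`XᵀX = I`, `XᵀP + PᵀX = 0`, and preserves the SO(r)-momentum
`Ψ = XᵀP − PᵀX`: one has `XᵀẊ + ẊᵀX = 0`, `ẊᵀP + XᵀṖ = 0`, hence the
derivatives of the constraints and of `Ψ` vanish along the flow. -/
theorem stmt_2 {n r : ℕ} (a : Fin n → ℝ) (κ : ℝ)
    (A : Matrix (Fin n) (Fin n) ℝ) (hA : A = Matrix.diagonal a)
    (X P : Matrix (Fin n) (Fin r) ℝ)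
    (hX : Xᵀ * X = 1) (hXP : Xᵀ * P + Pᵀ * X = 0)
    (Λ : Matrix (Fin r) (Fin r) ℝ) (hΛ : Λ = -(Xᵀ * A * X) - Pᵀ * P)
    (Xd Pd : Matrix (Fin n) (Fin r) ℝ)
    (hXd : Xd = P - (1 + 2 * κ) • (X * Pᵀ * X))
    (hPd : Pd = A * X + (1 + 2 * κ) • (P * Xᵀ * P) + X * Λ) :
    Xᵀ * Xd + Xdᵀ * X = 0 ∧
      Xdᵀ * P + Xᵀ * Pd = 0 ∧
      (Xdᵀ * P + Xᵀ * Pd) + (Pdᵀ * X + Pᵀ * Xd) = 0 ∧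
      (Xdᵀ * P + Xᵀ * Pd) - (Pdᵀ * X + Pᵀ * Xd) = 0 :=
  stmt_2_general κ A X P hX hXP Λ hΛ Xd Pd hXd hPd
end

section
/- Let A = diag(a_1,…,a_n) be a real diagonal n×n matrix, κ ∈ ℝ, and let X, P be real n×r matrices satisfying X^T X = I_r and X^T P + P^T X = 0. Define Λ = −X^T A X − P^T P, Ẋ = P − (1+2κ) X P^T X, Ṗ = A X + (1+2κ) P X^T P + X Λ. For λ ∈ ℝ with λ ≠ a_i for all i, set R = (λ I_n − A)^{−1} and define the 2r×2r matrices L(λ) = [[X^T R P, X^T R X],[I_r − P^T R P, −P^T R X]] and N_κ(λ) = [[(1+2κ) X^T P, I_r],[λ I_r + Λ, −(1+2κ) P^T X]]. Then the derivative of L(λ) along the flow, namely the block matrix [[Ẋ^T R P + X^T R Ṗ, Ẋ^T R X + X^T R Ẋ],[−Ṗ^T R P − P^T R Ṗ, −Ṗ^T R X − P^T R Ẋ]], equals the commutator [L(λ), N_κ(λ)]. -/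
/-!
With `R = (λ - A)⁻¹` one has `RA = AR = λR - 1`, and `Aᵀ = A`. Substituting the flow into the
derivative of `L(λ)`, eliminating every `A` adjacent to `R` by this resolvent identity and every
`XᵀX`, `PᵀX` by the Stiefel constraints, both sides of the Lax equation reduce, block by block,
to the same polynomial in `X`, `P`, `R` and `λ`.
-/

open Matrix

section Resolvent

variable {m K : Type*} [Fintype m] [DecidableEq m] [CommRing K] {A : Matrix m m K} {lam : K}

theorem resolvent_mul_self (h : IsUnit (lam • 1 - A).det) :
    (lam • 1 - A)⁻¹ * A = lam • (lam • 1 - A)⁻¹ - 1 := by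
  have hinv := nonsing_inv_mul _ h
  rw [mul_sub, mul_smul_comm, mul_one] at hinv
  linear_combination (norm := abel) -hinv

theorem self_mul_resolvent (h : IsUnit (lam • 1 - A).det) :
    A * (lam • 1 - A)⁻¹ = lam • (lam • 1 - A)⁻¹ - 1 := by
  have hinv := mul_nonsing_inv _ h
  rw [sub_mul, smul_mul_assoc, one_mul] at hinv
  linear_combination (norm := abel) -hinv

theorem isUnit_det_smul_one_sub_diagonal {K : Type*} [Field K] {a : m → K} {lam : K}
    (h : ∀ i, lam ≠ a i) : IsUnit (lam • 1 - diagonal a).det := by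
  rw [← isUnit_iff_isUnit_det, smul_one_eq_diagonal, diagonal_sub, isUnit_diagonal,
    Pi.isUnit_iff]
  exact fun i => (sub_ne_zero.mpr (h i)).isUnit

end Resolvent

section NeumannLax

variable {m ι K : Type*} [Fintype m] [Fintype ι] [DecidableEq ι] [CommRing K]

def neumannLaxL (R : Matrix m m K) (X P : Matrix m ι K) : Matrix (ι ⊕ ι) (ι ⊕ ι) K :=
  fromBlocks (Xᵀ * R * P) (Xᵀ * R * X) (1 - Pᵀ * R * P) (-(Pᵀ * R * X))

def neumannLaxN (c lam : K) (Λ : Matrix ι ι K) (X P : Matrix m ι K) :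
    Matrix (ι ⊕ ι) (ι ⊕ ι) K :=
  fromBlocks (c • (Xᵀ * P)) 1 (lam • 1 + Λ) (-(c • (Pᵀ * X)))

/-- The derivative of `neumannLaxL R X P` in the direction `(Xd, Pd)`. -/
def neumannLaxLDeriv (R : Matrix m m K) (X P Xd Pd : Matrix m ι K) :
    Matrix (ι ⊕ ι) (ι ⊕ ι) K :=
  fromBlocks (Xdᵀ * R * P + Xᵀ * R * Pd) (Xdᵀ * R * X + Xᵀ * R * Xd)
    (-(Pdᵀ * R * P) - Pᵀ * R * Pd) (-(Pdᵀ * R * X) - Pᵀ * R * Xd)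

theorem neumannLaxLDeriv_eq_commutator [DecidableEq m] {c lam : K} {A R : Matrix m m K}
    {X P : Matrix m ι K} (hAT : Aᵀ = A) (hRA : R * A = lam • R - 1)
    (hAR : A * R = lam • R - 1) (hX : Xᵀ * X = 1) (hXP : Xᵀ * P + Pᵀ * X = 0) :
    let Λ := -(Xᵀ * A * X) - Pᵀ * P
    neumannLaxLDeriv R X P (P - c • (X * Pᵀ * X)) (A * X + c • (P * Xᵀ * P) + X * Λ) =
      neumannLaxL R X P * neumannLaxN c lam Λ X P -
        neumannLaxN c lam Λ X P * neumannLaxL R X P := by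
  intro Λ
  have hPX : Pᵀ * X = -(Xᵀ * P) := eq_neg_of_add_eq_zero_right hXP
  have hPX' (Y : Matrix ι ι K) : Pᵀ * (X * Y) = -(Xᵀ * (P * Y)) := by
    rw [← Matrix.mul_assoc, hPX, ← Matrix.mul_assoc, neg_mul]
  have hRA' (Y : Matrix m ι K) : R * (A * Y) = lam • (R * Y) - Y := by
    rw [← Matrix.mul_assoc, hRA, Matrix.sub_mul, Matrix.smul_mul, Matrix.one_mul]
  have hAR' (Y : Matrix m ι K) : A * (R * Y) = lam • (R * Y) - Y := by
    rw [← Matrix.mul_assoc, hAR, Matrix.sub_mul, Matrix.smul_mul, Matrix.one_mul]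
  simp only [neumannLaxLDeriv, neumannLaxL, neumannLaxN, Λ, fromBlocks_multiply, sub_eq_add_neg,
    fromBlocks_neg, fromBlocks_add]
  refine fromBlocks_inj.mpr ⟨?_, ?_, ?_, ?_⟩ <;>
  · simp only [transpose_add, transpose_mul, transpose_smul, transpose_neg, transpose_transpose,
      hAT]
    simp only [Matrix.mul_assoc, Matrix.mul_add, Matrix.add_mul, Matrix.mul_smul, Matrix.smul_mul,
      Matrix.mul_neg, Matrix.neg_mul, Matrix.mul_one, Matrix.one_mul]
    simp only [hPX', hRA', hAR', hX, hPX, Matrix.mul_sub, Matrix.mul_smul, Matrix.mul_neg]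
    module

end NeumannLax

/-- The 'small' 2r×2r Lax representation of the Neumann systems on the
Stiefel variety: with `R = (λIₙ − A)⁻¹`, the derivative of the block Lax
matrix `L(λ)` along the Neumann flow equals the commutator `[L(λ), N_κ(λ)]`. -/
theorem stmt_3 {n r : ℕ} (a : Fin n → ℝ) (κ : ℝ)
    (A : Matrix (Fin n) (Fin n) ℝ) (hA : A = Matrix.diagonal a)
    (X P : Matrix (Fin n) (Fin r) ℝ)
    (hX : Xᵀ * X = 1) (hXP : Xᵀ * P + Pᵀ * X = 0)
    (Λ : Matrix (Fin r) (Fin r) ℝ) (hΛ : Λ = -(Xᵀ * A * X) - Pᵀ * P)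
    (Xd Pd : Matrix (Fin n) (Fin r) ℝ)
    (hXd : Xd = P - (1 + 2 * κ) • (X * Pᵀ * X))
    (hPd : Pd = A * X + (1 + 2 * κ) • (P * Xᵀ * P) + X * Λ)
    (lam : ℝ) (hlam : ∀ i, lam ≠ a i)
    (R : Matrix (Fin n) (Fin n) ℝ) (hR : R = (lam • (1 : Matrix (Fin n) (Fin n) ℝ) - A)⁻¹)
    (L N : Matrix (Fin r ⊕ Fin r) (Fin r ⊕ Fin r) ℝ)
    (hL : L = Matrix.fromBlocks (Xᵀ * R * P) (Xᵀ * R * X)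
      (1 - Pᵀ * R * P) (-(Pᵀ * R * X)))
    (hN : N = Matrix.fromBlocks ((1 + 2 * κ) • (Xᵀ * P)) 1
      (lam • (1 : Matrix (Fin r) (Fin r) ℝ) + Λ) (-((1 + 2 * κ) • (Pᵀ * X)))) :
    Matrix.fromBlocks (Xdᵀ * R * P + Xᵀ * R * Pd) (Xdᵀ * R * X + Xᵀ * R * Xd)
        (-(Pdᵀ * R * P) - Pᵀ * R * Pd) (-(Pdᵀ * R * X) - Pᵀ * R * Xd) =
      L * N - N * L := by
  have hAT : Aᵀ = A := by rw [hA, diagonal_transpose]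
  have hdet : IsUnit (lam • 1 - A).det := hA ▸ isUnit_det_smul_one_sub_diagonal hlam
  subst hR hL hN hΛ hXd hPd
  exact neumannLaxLDeriv_eq_commutator hAT (resolvent_mul_self hdet)
    (self_mul_resolvent hdet) hX hXP
end

section
/- Let U, V, W be r×r complex matrices and K = [[V, U],[W, −V^T]]. Suppose Ψ is a 2r×r matrix whose columns ψ_1,…,ψ_r are eigenvectors of K with eigenvalues w_1,…,w_r (i.e. K Ψ = Ψ D with D = diag(w_1,…,w_r)), write Ψ = [[Ξ],[Υ]] with Ξ, Υ of size r×r, and assume Ξ is invertible. Then Γ = Υ Ξ^{−1} satisfies Γ U Γ + Γ V + V^T Γ − W = 0. If moreover U and W are symmetric, the w_1,…,w_r are pairwise distinct, and w_i + w_j ≠ 0 for all i, j, then Γ = Υ Ξ^{−1} is symmetric. -/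
/-!
Both halves come from `KΨ = ΨD` read blockwise: `VΞ + UΥ = ΞD` and `WΞ − VᵀΥ = ΥD`.
Multiplying the Riccati expression on the right by `Ξ` and using `ΓΞ = Υ` turns it into
`Γ(ΞD) − ΥD = 0`. For symmetry, `K` is Hamiltonian when `U` and `W` are symmetric, i.e. `JK`
is symmetric for the standard skew matrix `J`; hence the skew Gram matrix `M = ΨᵀJΨ` of the
eigenvectors satisfies `DM + MD = 0`, so `(w_i + w_j) M_ij = 0` and `M = ΥᵀΞ − ΞᵀΥ`
vanishes.
Then `Γᵀ = Ξ⁻ᵀ(ΥᵀΞ)Ξ⁻¹ = Ξ⁻ᵀ(ΞᵀΥ)Ξ⁻¹ = Γ`.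
-/

open Matrix

namespace Matrix

variable {R n m : Type*}

theorem riccati_mul_eq_zero [Ring R] [Fintype n] [Fintype m]
    {U V W Γ : Matrix n n R} {Ξ Υ : Matrix n m R} {D : Matrix m m R}
    (h₁ : V * Ξ + U * Υ = Ξ * D) (h₂ : W * Ξ + -Vᵀ * Υ = Υ * D) (hΓ : Γ * Ξ = Υ) :
    (Γ * U * Γ + Γ * V + Vᵀ * Γ - W) * Ξ = 0 :=
  calc (Γ * U * Γ + Γ * V + Vᵀ * Γ - W) * Ξ
      = Γ * (V * Ξ + U * Υ) - (W * Ξ + -Vᵀ * Υ) := by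
        simp only [Matrix.sub_mul, Matrix.add_mul, Matrix.mul_add, Matrix.neg_mul,
          Matrix.mul_assoc, hΓ]
        abel
    _ = 0 := by rw [h₁, h₂, ← Matrix.mul_assoc, hΓ, sub_self]

theorem skewForm_anticomm_of_mul_eq_mul [CommRing R] [Fintype n] [Fintype m]
    {J K : Matrix n n R} {Ψ : Matrix n m R} {D : Matrix m m R}
    (hJ : Jᵀ = -J) (hJK : (J * K).IsSymm) (hΨ : K * Ψ = Ψ * D) :
    Dᵀ * (Ψᵀ * J * Ψ) + Ψᵀ * J * Ψ * D = 0 := by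
  have hform : Ψᵀ * J * Ψ * D = Ψᵀ * (J * K) * Ψ := by
    simp only [Matrix.mul_assoc, hΨ]
  have hskew : (Ψᵀ * J * Ψ * D)ᵀ = -(Dᵀ * (Ψᵀ * J * Ψ)) := by
    simp only [transpose_mul, hJ, transpose_transpose, Matrix.mul_neg, Matrix.neg_mul,
      Matrix.mul_assoc]
  have hsymm : (Ψᵀ * J * Ψ * D)ᵀ = Ψᵀ * J * Ψ * D := by
    rw [hform, transpose_mul, transpose_mul, hJK.eq, transpose_transpose]
    simp only [Matrix.mul_assoc]
  rw [← neg_eq_iff_add_eq_zero, ← hskew, hsymm]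

theorem eq_zero_of_diagonal_mul_add_mul_diagonal_eq_zero [CommRing R] [NoZeroDivisors R]
    [Fintype n] [DecidableEq n] {w : n → R} {M : Matrix n n R}
    (hw : ∀ i j, w i + w j ≠ 0) (hM : diagonal w * M + M * diagonal w = 0) : M = 0 := by
  ext i j
  have hij : (w i + w j) * M i j = 0 := by
    have hM_ij := congrFun (congrFun hM i) j
    simp only [add_apply, diagonal_mul, mul_diagonal, zero_apply] at hM_ij
    linear_combination hM_ij
  exact (mul_eq_zero.mp hij).resolve_left (hw i j)

theorem isSymm_J_mul_fromBlocks [CommRing R] [Fintype n] [DecidableEq n]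
    {U V W : Matrix n n R} (hU : U.IsSymm) (hW : W.IsSymm) :
    (J n R * fromBlocks V U W (-Vᵀ)).IsSymm := by
  rw [IsSymm, J, fromBlocks_multiply, fromBlocks_transpose]
  simp [hU.eq, hW.eq]

theorem transpose_fromRows_mul_J_mul_fromRows [CommRing R] [Fintype n] [DecidableEq n]
    (Ξ Υ : Matrix n m R) :
    (fromRows Ξ Υ)ᵀ * J n R * fromRows Ξ Υ = Υᵀ * Ξ - Ξᵀ * Υ := by
  rw [Matrix.mul_assoc, J, fromBlocks_mul_fromRows, transpose_fromRows, fromCols_mul_fromRows]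
  simp [sub_eq_neg_add]

theorem isSymm_mul_inv_of_transpose_mul_eq [CommRing R] [Fintype n] [DecidableEq n]
    {Ξ Υ : Matrix n n R} (hΞ : IsUnit Ξ) (h : Υᵀ * Ξ = Ξᵀ * Υ) : (Υ * Ξ⁻¹).IsSymm := by
  have hdet : IsUnit Ξ.det := (isUnit_iff_isUnit_det Ξ).mp hΞ
  have hdetT : IsUnit Ξᵀ.det := by rwa [det_transpose]
  rw [IsSymm, transpose_mul, transpose_nonsing_inv]
  calc Ξᵀ⁻¹ * Υᵀ = Ξᵀ⁻¹ * (Υᵀ * Ξ) * Ξ⁻¹ := by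
        rw [Matrix.mul_assoc, Matrix.mul_assoc, mul_nonsing_inv Ξ hdet, Matrix.mul_one]
    _ = Υ * Ξ⁻¹ := by rw [h, ← Matrix.mul_assoc, nonsing_inv_mul _ hdetT, Matrix.one_mul]

variable [CommRing R] [Fintype n] [DecidableEq n]
  {U V W Ξ Υ : Matrix n n R} {w : n → R}

theorem riccati_mul_inv_of_fromBlocks_mul_fromRows {D : Matrix n n R}
    (hΨ : fromBlocks V U W (-Vᵀ) * fromRows Ξ Υ = fromRows Ξ Υ * D) (hΞ : IsUnit Ξ) :
    Υ * Ξ⁻¹ * U * (Υ * Ξ⁻¹) + Υ * Ξ⁻¹ * V + Vᵀ * (Υ * Ξ⁻¹) - W = 0 := by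
  rw [fromBlocks_mul_fromRows, fromRows_mul, fromRows_ext_iff] at hΨ
  have hdet : IsUnit Ξ.det := (isUnit_iff_isUnit_det Ξ).mp hΞ
  have hΓ : Υ * Ξ⁻¹ * Ξ = Υ := by
    rw [Matrix.mul_assoc, nonsing_inv_mul Ξ hdet, Matrix.mul_one]
  have h := congrArg (· * Ξ⁻¹) (riccati_mul_eq_zero hΨ.1 hΨ.2 hΓ)
  simpa only [Matrix.mul_assoc, mul_nonsing_inv Ξ hdet, Matrix.mul_one, Matrix.zero_mul]
    using h

theorem isSymm_mul_inv_of_fromBlocks_mul_fromRows [NoZeroDivisors R]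
    (hΨ : fromBlocks V U W (-Vᵀ) * fromRows Ξ Υ = fromRows Ξ Υ * diagonal w)
    (hΞ : IsUnit Ξ) (hU : U.IsSymm) (hW : W.IsSymm) (hw : ∀ i j, w i + w j ≠ 0) :
    (Υ * Ξ⁻¹).IsSymm := by
  have hanticomm :=
    skewForm_anticomm_of_mul_eq_mul (J_transpose n R) (isSymm_J_mul_fromBlocks hU hW) hΨ
  rw [diagonal_transpose, transpose_fromRows_mul_J_mul_fromRows] at hanticomm
  exact isSymm_mul_inv_of_transpose_mul_eq hΞ
    (sub_eq_zero.mp (eq_zero_of_diagonal_mul_add_mul_diagonal_eq_zero hw hanticomm))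

end Matrix

/-- Potter's construction: if `Ψ = [[Ξ],[Υ]]` is an eigenmatrix of
`K = [[V,U],[W,−Vᵀ]]` (i.e. `KΨ = Ψ·diag(w)`) with `Ξ` invertible, then
`Γ = ΥΞ⁻¹` solves `ΓUΓ + ΓV + VᵀΓ − W = 0`; if moreover `U, W` are symmetric
and the eigenvalues `w_i` are pairwise distinct with `w_i + w_j ≠ 0`, then
`Γ` is symmetric. -/
theorem stmt_8 {r : ℕ} (U V W : Matrix (Fin r) (Fin r) ℂ)
    (K : Matrix (Fin r ⊕ Fin r) (Fin r ⊕ Fin r) ℂ)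
    (hK : K = Matrix.fromBlocks V U W (-Vᵀ))
    (w : Fin r → ℂ) (Ξ Υ : Matrix (Fin r) (Fin r) ℂ)
    (hΨ : K * Matrix.fromRows Ξ Υ = Matrix.fromRows Ξ Υ * Matrix.diagonal w)
    (hΞ : IsUnit Ξ)
    (Γ : Matrix (Fin r) (Fin r) ℂ) (hΓ : Γ = Υ * Ξ⁻¹) :
    Γ * U * Γ + Γ * V + Vᵀ * Γ - W = 0 ∧
      (Uᵀ = U → Wᵀ = W → Function.Injective w →
        (∀ i j, w i + w j ≠ 0) → Γᵀ = Γ) := by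
  subst hK hΓ
  exact ⟨riccati_mul_inv_of_fromBlocks_mul_fromRows hΨ hΞ,
    fun hU hW _ hw => isSymm_mul_inv_of_fromBlocks_mul_fromRows hΨ hΞ hU hW hw⟩
end

section
/- Let U, V, W be r×r complex matrices with U and W symmetric, and K = [[V, U],[W, −V^T]]. Assume K has 2r pairwise distinct eigenvalues. If a symmetric r×r matrix Γ satisfies Γ U Γ + Γ V + V^T Γ − W = 0, then there exist eigenvectors ψ_1,…,ψ_r of K with eigenvalues w_1,…,w_r, pairwise distinct and satisfying w_i + w_j ≠ 0 for all i, j, such that, writing Ψ = (ψ_1 ⋯ ψ_r) = [[Ξ],[Υ]] with r×r blocks, the matrix Ξ is invertible and Γ = Υ Ξ^{−1}. -/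
/-!
The Riccati equation says exactly that the graph `Ψ = [1; Γ]` of `Γ` is `K`-invariant:
`K Ψ = Ψ M` with `M = V + U Γ`. In the eigenbasis `Q` of `K` this reads
`diagonal d * C = C * M` with `C = Q⁻¹ Ψ`, so every nonzero row of `C` is a left eigenvector
of `M` for the eigenvalue `d k`. As the `d k` are distinct these rows are independent, and since
`C` has rank `r` there are exactly `r` of them; the corresponding `r × r` block `C_S` is
invertible and `Ψ C_S⁻¹` is the matrix of the eigenvector columns `S` of `Q`.

For the eigenvalues, `K` is Hamiltonian (`Kᵀ J = -J K`), so the invertible Gram matrix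
`G = Qᵀ J Q` satisfies `(d k + d l) G k l = 0`. The graph of a symmetric `Γ` is Lagrangian, so
`G k l = 0` for `k, l ∈ S`; if moreover `d k + d l = 0`, simplicity of the spectrum forces the
whole row `k` of `G` to vanish, which is impossible.
-/

open Matrix

namespace Matrix

variable {𝕜 n m : Type*} [Field 𝕜] [Fintype n] [Fintype m]

theorem linearIndependent_nonzero_rows_of_diagonal_mul_eq_mul [DecidableEq n] {d : n → 𝕜}
    (hd : Function.Injective d) {C : Matrix n m 𝕜} {M : Matrix m m 𝕜}
    (h : diagonal d * C = C * M) :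
    LinearIndependent 𝕜 (fun k : {k // C k ≠ 0} => C k) := by
  refine Module.End.eigenvectors_linearIndependent' (vecMulLinear M)
    (fun k : {k // C k ≠ 0} => d k) (hd.comp Subtype.val_injective) _ fun k => ⟨?_, k.2⟩
  rw [Module.End.mem_eigenspace_iff, coe_vecMulLinear]
  ext j
  have hkj := congrFun (congrFun h k) j
  rw [diagonal_mul, mul_apply] at hkj
  simp [vecMul, dotProduct, hkj]

theorem exists_isUnit_submatrix_of_diagonal_mul_eq_mul [DecidableEq n] [DecidableEq m]
    {d : n → 𝕜} (hd : Function.Injective d) {C : Matrix n m 𝕜} {M : Matrix m m 𝕜}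
    (h : diagonal d * C = C * M) (hC : C.rank = Fintype.card m) :
    ∃ f : m → n, Function.Injective f ∧ (∀ k ∉ Set.range f, C k = 0) ∧
      IsUnit (C.submatrix f id) := by
  classical
  have hli := linearIndependent_nonzero_rows_of_diagonal_mul_eq_mul hd h
  have hcard : Fintype.card m = Fintype.card {k // C k ≠ 0} := by
    have hrows : Set.range (fun k : {k // C k ≠ 0} => C k) = Set.range C.row \ {0} := by
      ext v
      simp only [Set.mem_range, Subtype.exists, exists_prop, Set.mem_sdiff, row,
        Set.mem_singleton_iff]
      grind
    rw [← hC, rank_eq_finrank_span_row, ← Submodule.span_sdiff_singleton_zero, ← hrows,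
      finrank_span_eq_card hli]
  let σ := Fintype.equivOfCardEq hcard
  refine ⟨fun i => σ i, Subtype.val_injective.comp σ.injective, fun k hk => ?_, ?_⟩
  · by_contra hk0
    exact hk ⟨σ.symm ⟨k, hk0⟩, by simp⟩
  · exact linearIndependent_rows_iff_isUnit.mp (hli.comp σ σ.injective)

theorem mul_eq_submatrix_mul_submatrix {R l : Type*} [NonUnitalNonAssocSemiring R]
    (Q : Matrix l n R) {C : Matrix n m R} {f : m → n} (hf : Function.Injective f)
    (hC : ∀ k ∉ Set.range f, C k = 0) :
    Q * C = Q.submatrix id f * C.submatrix f id := by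
  ext a j
  exact (Fintype.sum_of_injective f hf _ _ (fun k hk => by simp [hC k hk]) fun _ => rfl).symm

theorem mul_submatrix_eq_submatrix_mul_diagonal {R : Type*} [NonUnitalNonAssocSemiring R]
    [DecidableEq n] [DecidableEq m] {K Q : Matrix n n R} {d : n → R}
    (hKQ : K * Q = Q * diagonal d) (f : m → n) :
    K * Q.submatrix id f = Q.submatrix id f * diagonal (d ∘ f) := by
  ext a i
  rw [mul_diagonal]
  exact (congrFun (congrFun hKQ a) (f i)).trans (mul_diagonal _ _ _ _)

/-- A `K`-invariant subspace, `K` diagonalizable with simple spectrum, is spanned by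
eigenvectors. -/
theorem exists_mul_eq_submatrix_of_mul_eq_mul [DecidableEq n] [DecidableEq m]
    {K Q : Matrix n n 𝕜} {d : n → 𝕜} (hd : Function.Injective d) (hQ : IsUnit Q)
    (hKQ : K * Q = Q * diagonal d) {Ψ : Matrix n m 𝕜} {M : Matrix m m 𝕜}
    (hKΨ : K * Ψ = Ψ * M) (hΨ : Ψ.rank = Fintype.card m) :
    ∃ f : m → n, Function.Injective f ∧
      ∃ Ξ : Matrix m m 𝕜, IsUnit Ξ ∧ Ψ * Ξ = Q.submatrix id f := by
  have hQdet := (isUnit_iff_isUnit_det Q).mp hQ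
  set C := Q⁻¹ * Ψ
  have hDC : diagonal d * C = C * M := by
    rw [← nonsing_inv_mul_cancel_left Q (diagonal d * C) hQdet, ← Matrix.mul_assoc Q, ← hKQ,
      Matrix.mul_assoc, mul_nonsing_inv_cancel_left _ _ hQdet, hKΨ, Matrix.mul_assoc]
  have hC : C.rank = Fintype.card m := by
    rw [rank_mul_eq_right_of_isUnit_det _ _ (isUnit_nonsing_inv_det Q hQdet), hΨ]
  obtain ⟨f, hf, hCf, hunit⟩ := exists_isUnit_submatrix_of_diagonal_mul_eq_mul hd hDC hC
  refine ⟨f, hf, (C.submatrix f id)⁻¹, isUnit_nonsing_inv_iff.mpr hunit, ?_⟩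
  rw [← mul_nonsing_inv_cancel_left Q Ψ hQdet, mul_eq_submatrix_mul_submatrix Q hf hCf,
    Matrix.mul_assoc, mul_nonsing_inv _ ((isUnit_iff_isUnit_det _).mp hunit), Matrix.mul_one]

theorem add_ne_zero_of_transpose_mul_mul_apply_eq_zero [DecidableEq n] {K Q J : Matrix n n 𝕜}
    {d : n → 𝕜} (hd : Function.Injective d) (hQ : IsUnit Q) (hJ : IsUnit J)
    (hKJ : Kᵀ * J = -(J * K)) (hKQ : K * Q = Q * diagonal d) {k l : n}
    (hkl : (Qᵀ * J * Q) k l = 0) : d k + d l ≠ 0 := by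
  set G := Qᵀ * J * Q
  have hG : diagonal d * G = -(G * diagonal d) :=
    calc diagonal d * G = (K * Q)ᵀ * J * Q := by
          rw [hKQ, transpose_mul, diagonal_transpose]; simp only [G, Matrix.mul_assoc]
      _ = Qᵀ * (Kᵀ * J) * Q := by simp only [transpose_mul, Matrix.mul_assoc]
      _ = -(G * diagonal d) := by
          rw [hKJ]; simp only [G, Matrix.mul_neg, Matrix.neg_mul, Matrix.mul_assoc, hKQ]
  have hpair : ∀ j, (d k + d j) * G k j = 0 := fun j => by
    have hkj := congrFun (congrFun hG k) j
    rw [diagonal_mul, neg_apply, mul_diagonal] at hkj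
    linear_combination hkj
  intro hsum
  have hrow : ∀ j, G k j = 0 := fun j => by
    by_cases hj : j = l
    · exact hj ▸ hkl
    · refine (mul_eq_zero.mp (hpair j)).resolve_left fun h => hj (hd ?_)
      linear_combination h - hsum
  have hGunit : IsUnit G := ((Q.isUnit_transpose.mpr hQ).mul hJ).mul hQ
  exact ((isUnit_iff_isUnit_det G).mp hGunit).ne_zero (det_eq_zero_of_row_eq_zero k hrow)

end Matrix

section BlockMatrices

variable {R l : Type*} [CommRing R] [Fintype l] [DecidableEq l]

theorem fromBlocks_transpose_mul_J {U V W : Matrix l l R} (hU : Uᵀ = U) (hW : Wᵀ = W) :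
    (fromBlocks V U W (-Vᵀ))ᵀ * J l R = -(J l R * fromBlocks V U W (-Vᵀ)) := by
  simp [J, fromBlocks_transpose, fromBlocks_multiply, fromBlocks_neg, hU, hW]

theorem fromBlocks_mul_fromRows_one {U V W Γ : Matrix l l R}
    (hΓ : Γ * U * Γ + Γ * V + Vᵀ * Γ - W = 0) :
    fromBlocks V U W (-Vᵀ) * fromRows (1 : Matrix l l R) Γ =
      fromRows (1 : Matrix l l R) Γ * (V + U * Γ) := by
  rw [fromBlocks_mul_fromRows, fromRows_mul, ← sub_eq_zero.mp hΓ]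
  congr 1 <;> noncomm_ring

theorem fromRows_one_transpose_mul_J_mul {Γ : Matrix l l R} (hΓ : Γᵀ = Γ) :
    (fromRows (1 : Matrix l l R) Γ)ᵀ * J l R * fromRows (1 : Matrix l l R) Γ = 0 := by
  simp [J, transpose_fromRows, fromCols_mul_fromBlocks, fromCols_mul_fromRows, hΓ]

theorem rank_fromRows_one [Nontrivial R] (Γ : Matrix l l R) :
    (fromRows (1 : Matrix l l R) Γ).rank = Fintype.card l := by
  have hinl : (fromRows (1 : Matrix l l R) Γ).submatrix Sum.inl id = 1 := by
    ext i j
    simp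
  refine le_antisymm (rank_le_card_width _) ?_
  simpa [hinl] using rank_submatrix_le (fromRows (1 : Matrix l l R) Γ) Sum.inl id

end BlockMatrices

/-- Potter's theorem (Proposition quad_sol): if `K = [[V,U],[W,−Vᵀ]]` (with
`U, W` symmetric) has `2r` pairwise distinct eigenvalues, then every symmetric
solution `Γ` of `ΓUΓ + ΓV + VᵀΓ − W = 0` has the form `Γ = ΥΞ⁻¹` for a
non-special eigenmatrix `[[Ξ],[Υ]]` of `K` (eigenvectors with pairwise
distinct eigenvalues `w_i` satisfying `w_i + w_j ≠ 0`). -/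
theorem stmt_9 {r : ℕ} (U V W : Matrix (Fin r) (Fin r) ℂ)
    (hU : Uᵀ = U) (hW : Wᵀ = W)
    (K : Matrix (Fin r ⊕ Fin r) (Fin r ⊕ Fin r) ℂ)
    (hK : K = Matrix.fromBlocks V U W (-Vᵀ))
    (hdiag : ∃ (Q : Matrix (Fin r ⊕ Fin r) (Fin r ⊕ Fin r) ℂ)
        (d : Fin r ⊕ Fin r → ℂ),
      IsUnit Q ∧ Function.Injective d ∧ K = Q * Matrix.diagonal d * Q⁻¹)
    (Γ : Matrix (Fin r) (Fin r) ℂ) (hΓsym : Γᵀ = Γ)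
    (hΓ : Γ * U * Γ + Γ * V + Vᵀ * Γ - W = 0) :
    ∃ (w : Fin r → ℂ) (Ξ Υ : Matrix (Fin r) (Fin r) ℂ),
      Function.Injective w ∧ (∀ i j, w i + w j ≠ 0) ∧
      K * Matrix.fromRows Ξ Υ = Matrix.fromRows Ξ Υ * Matrix.diagonal w ∧
      IsUnit Ξ ∧ Γ = Υ * Ξ⁻¹ := by
  obtain ⟨Q, d, hQ, hd, hKd⟩ := hdiag
  have hKQ : K * Q = Q * diagonal d := by
    rw [hKd, nonsing_inv_mul_cancel_right _ _ ((isUnit_iff_isUnit_det Q).mp hQ)]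
  obtain ⟨f, hf, Ξ, hΞ, hΨΞ⟩ := exists_mul_eq_submatrix_of_mul_eq_mul hd hQ hKQ
    (hK ▸ fromBlocks_mul_fromRows_one hΓ) (rank_fromRows_one Γ)
  have hfromRows : fromRows Ξ (Γ * Ξ) = Q.submatrix id f := by
    rw [← hΨΞ, fromRows_mul, Matrix.one_mul]
  refine ⟨d ∘ f, Ξ, Γ * Ξ, hd.comp hf, fun i j => ?_,
    hfromRows ▸ mul_submatrix_eq_submatrix_mul_diagonal hKQ f, hΞ,
    (mul_nonsing_inv_cancel_right _ _ ((isUnit_iff_isUnit_det _).mp hΞ)).symm⟩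
  have hiso : (Q.submatrix id f)ᵀ * J (Fin r) ℂ * Q.submatrix id f = 0 := by
    rw [← hΨΞ, transpose_mul]
    simp only [← Matrix.mul_assoc]
    rw [Matrix.mul_assoc Ξᵀ, Matrix.mul_assoc Ξᵀ, fromRows_one_transpose_mul_J_mul hΓsym]
    simp
  refine add_ne_zero_of_transpose_mul_mul_apply_eq_zero hd hQ
    ((isUnit_iff_isUnit_det _).mpr (isUnit_det_J _ _)) (hK ▸ fromBlocks_transpose_mul_J hU hW)
    hKQ ?_
  simpa [mul_apply] using congrFun (congrFun hiso i) j
end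

section
/- Let A = diag(a_1,…,a_n) be a real diagonal matrix, λ* ∈ ℝ with λ* > a_i for all i, and B = diag(√(λ*−a_1),…,√(λ*−a_n)). Let X, X̃ be real n×r matrices with X^T X = X̃^T X̃ = I_r, set Γ = ½(X̃^T B X + X^T B X̃), P = B X̃ − X Γ, and P̃ = −B X + X̃ Γ. Then for every λ ∈ ℝ with λ ≠ a_i for all i, the intertwining relation L̃(λ) M(λ, λ*) = M(λ, λ*) L(λ) holds, where L(λ) = [[X^T R P, X^T R X],[I_r − P^T R P, −P^T R X]] with R = (λ I_n − A)^{−1}, L̃(λ) is the same expression with (X, P) replaced by (X̃, P̃), and M(λ, λ*) = [[−Γ, I_r],[(λ − λ*) I_r + Γ², −Γ]]. -/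
/-!
Both `L(λ)` and `M(λ, λ*)` are built from `X`, `P`, `Γ` and the resolvent `R = (λ - A)⁻¹`, so the
intertwining relation is a polynomial identity in these matrices. Expanding the four blocks, it
reduces to the orthonormality `XᵀX = X̃ᵀX̃ = 1`, the symmetry of `B` and `Γ`, the commutation
`BR = RB`, and the resolvent identity `R B² = 1 - (λ - λ*) R`, which holds because
`B² = λ* - A = (λ - A) - (λ - λ*)`.
-/

open Matrix

section LaxPair

variable {K : Type*} [CommRing K] {m k : Type*} [Fintype m] [Fintype k] [DecidableEq m]
  [DecidableEq k]

/-- The Lax matrix `L(λ)` of the Neumann system at the point `(X, P)`, with `R = (λ - A)⁻¹`. -/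
def neumannLaxMatrix (X P : Matrix m k K) (R : Matrix m m K) : Matrix (k ⊕ k) (k ⊕ k) K :=
  fromBlocks (Xᵀ * R * P) (Xᵀ * R * X) (1 - Pᵀ * R * P) (-(Pᵀ * R * X))

/-- The intertwining matrix `M(λ, λ*)` of the discrete Neumann system, with `c = λ - λ*`. -/
def neumannIntertwiner (c : K) (Γ : Matrix k k K) : Matrix (k ⊕ k) (k ⊕ k) K :=
  fromBlocks (-Γ) 1 (c • 1 + Γ * Γ) (-Γ)

theorem neumannLaxMatrix_mul_neumannIntertwiner {B R : Matrix m m K} {c : K}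
    (hB : Bᵀ = B) (hBR : Commute B R) (hRBB : R * (B * B) = 1 - c • R)
    {X Xt : Matrix m k K} (hX : Xᵀ * X = 1) (hXt : Xtᵀ * Xt = 1)
    {Γ : Matrix k k K} (hΓ : Γᵀ = Γ) :
    neumannLaxMatrix Xt (-(B * X) + Xt * Γ) R * neumannIntertwiner c Γ =
      neumannIntertwiner c Γ * neumannLaxMatrix X (B * Xt - X * Γ) R := by
  -- `hBR` and `hRBB` in the right-associated form that `simp` with `Matrix.mul_assoc` produces
  have hBR' (Z : Matrix m k K) : B * (R * Z) = R * (B * Z) := by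
    rw [← Matrix.mul_assoc, hBR.eq, Matrix.mul_assoc]
  have hRBB' (Z : Matrix m k K) : R * (B * (B * Z)) = Z - c • (R * Z) := by
    rw [← Matrix.mul_assoc, ← Matrix.mul_assoc, Matrix.mul_assoc R B B, hRBB,
      Matrix.sub_mul, Matrix.one_mul, Matrix.smul_mul]
  rw [neumannLaxMatrix, neumannLaxMatrix, neumannIntertwiner, fromBlocks_multiply,
    fromBlocks_multiply, fromBlocks_inj]
  refine ⟨?_, ?_, ?_, ?_⟩ <;>
  · simp only [transpose_sub, transpose_add, transpose_neg, transpose_mul, hB, hΓ,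
      Matrix.mul_add, Matrix.add_mul, Matrix.mul_sub, Matrix.sub_mul, Matrix.neg_mul,
      Matrix.mul_neg, Matrix.smul_mul, Matrix.mul_smul, Matrix.mul_one, Matrix.one_mul,
      Matrix.mul_assoc, hBR', hRBB', hX, hXt, neg_neg, neg_sub, neg_add,
      sub_neg_eq_add, smul_add, smul_neg]
    abel

end LaxPair

section Diagonal

variable {n : Type*} [Fintype n] [DecidableEq n]

theorem inv_smul_one_sub_diagonal {K : Type*} [Field K] {lam : K} {a : n → K}
    (hlam : ∀ i, lam ≠ a i) :
    (lam • (1 : Matrix n n K) - diagonal a)⁻¹ = diagonal fun i => (lam - a i)⁻¹ := by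
  refine inv_eq_left_inv ?_
  rw [smul_one_eq_diagonal, diagonal_sub, diagonal_mul_diagonal, ← diagonal_one]
  exact congrArg diagonal (funext fun i => inv_mul_cancel₀ (sub_ne_zero.mpr (hlam i)))

theorem diagonal_sqrt_mul_self {s : ℝ} {a : n → ℝ} (ha : ∀ i, a i ≤ s) :
    (diagonal fun i => √(s - a i)) * diagonal (fun i => √(s - a i)) =
      diagonal fun i => s - a i := by
  rw [diagonal_mul_diagonal]
  congr 1
  ext i
  exact Real.mul_self_sqrt (sub_nonneg.mpr (ha i))

theorem diagonal_inv_sub_mul_diagonal_sub {K : Type*} [Field K] {lam : K} {a : n → K}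
    (hlam : ∀ i, lam ≠ a i) (s : K) :
    (diagonal fun i => (lam - a i)⁻¹) * diagonal (fun i => s - a i) =
      1 - (lam - s) • diagonal fun i => (lam - a i)⁻¹ := by
  rw [diagonal_mul_diagonal, ← diagonal_smul, ← diagonal_one, diagonal_sub]
  congr 1
  ext i
  have : lam - a i ≠ 0 := sub_ne_zero.mpr (hlam i)
  simp only [Pi.smul_apply, smul_eq_mul]
  field_simp
  ring

end Diagonal

/-- The discrete Lax pair of the discrete Neumann system on the Stiefel
variety: `L̃(λ) M(λ, λ*) = M(λ, λ*) L(λ)`, with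
`M(λ, λ*) = [[−Γ, I],[(λ−λ*)I + Γ², −Γ]]`. -/
theorem stmt_10 {n r : ℕ} (a : Fin n → ℝ) (lams : ℝ) (hlams : ∀ i, a i < lams)
    (A B : Matrix (Fin n) (Fin n) ℝ)
    (hA : A = Matrix.diagonal a)
    (hB : B = Matrix.diagonal fun i => Real.sqrt (lams - a i))
    (X Xt : Matrix (Fin n) (Fin r) ℝ) (hX : Xᵀ * X = 1) (hXt : Xtᵀ * Xt = 1)
    (Γ : Matrix (Fin r) (Fin r) ℝ)
    (hΓ : Γ = (1 / 2 : ℝ) • (Xtᵀ * B * X + Xᵀ * B * Xt))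
    (P Pt : Matrix (Fin n) (Fin r) ℝ)
    (hP : P = B * Xt - X * Γ) (hPt : Pt = -(B * X) + Xt * Γ) :
    ∀ lam : ℝ, (∀ i, lam ≠ a i) →
      ∀ R : Matrix (Fin n) (Fin n) ℝ,
        R = (lam • (1 : Matrix (Fin n) (Fin n) ℝ) - A)⁻¹ →
      Matrix.fromBlocks (Xtᵀ * R * Pt) (Xtᵀ * R * Xt)
          (1 - Ptᵀ * R * Pt) (-(Ptᵀ * R * Xt)) *
        Matrix.fromBlocks (-Γ) 1
          ((lam - lams) • (1 : Matrix (Fin r) (Fin r) ℝ) + Γ * Γ) (-Γ) =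
      Matrix.fromBlocks (-Γ) 1
          ((lam - lams) • (1 : Matrix (Fin r) (Fin r) ℝ) + Γ * Γ) (-Γ) *
        Matrix.fromBlocks (Xᵀ * R * P) (Xᵀ * R * X)
          (1 - Pᵀ * R * P) (-(Pᵀ * R * X)) := by
  intro lam hlam R hR
  rw [hA, inv_smul_one_sub_diagonal hlam] at hR
  have hBsymm : Bᵀ = B := by rw [hB, diagonal_transpose]
  have hΓsymm : Γᵀ = Γ := by
    rw [hΓ, transpose_smul, transpose_add, add_comm]
    simp only [transpose_mul, transpose_transpose, hBsymm, Matrix.mul_assoc]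
  have hRBB : R * (B * B) = 1 - (lam - lams) • R := by
    rw [hR, hB, diagonal_sqrt_mul_self fun i => (hlams i).le,
      diagonal_inv_sub_mul_diagonal_sub hlam]
  subst hP hPt
  have hBR : Commute B R := by
    rw [hB, hR]
    exact commute_diagonal _ _
  exact neumannLaxMatrix_mul_neumannIntertwiner hBsymm hBR hRBB hX hXt hΓsymm
end

section
/- Let A = diag(a_1,…,a_n) be a real diagonal matrix, λ* ∈ ℝ with λ* > a_i for all i, and B = diag(√(λ*−a_1),…,√(λ*−a_n)). Let X, X̃ be real n×r matrices with X^T X = X̃^T X̃ = I_r, set Γ = ½(X̃^T B X + X^T B X̃), P = B X̃ − X Γ, and P̃ = −B X + X̃ Γ. Then X^T P + P^T X = 0, X̃^T P̃ + P̃^T X̃ = 0, and X̃^T P̃ = X^T P; in particular both (X,P) and (X̃,P̃) lie on the cotangent bundle of the Stiefel variety V_{n,r} and the discrete map preserves the SO(r)-momentum Ψ = X^T P − P^T X. -/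
/-! With `S = XᵀBX̃` and `B` symmetric, `X̃ᵀBX = Sᵀ`, so `Γ` is the symmetric part of `S`.
Orthonormality of the columns gives `XᵀP = S - Γ` and `X̃ᵀP̃ = Γ - Sᵀ`, and both are the
skew-symmetric part `(S - Sᵀ)/2` of `S`; in particular `XᵀP + PᵀX = XᵀP + (XᵀP)ᵀ = 0`. -/

open Matrix

namespace Matrix

variable {m n R : Type*} [Fintype n] [CommRing R]

theorem transpose_mul_mul_transpose_of_symm {B : Matrix n n R} (hB : Bᵀ = B)
    (X Y : Matrix n m R) : (Xᵀ * B * Y)ᵀ = Yᵀ * B * X := by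
  rw [transpose_mul, transpose_mul, transpose_transpose, hB, Matrix.mul_assoc]

theorem transpose_mul_add_transpose_mul (X P : Matrix n m R) :
    Xᵀ * P + Pᵀ * X = Xᵀ * P + (Xᵀ * P)ᵀ := by
  rw [transpose_mul, transpose_transpose]

theorem transpose_mul_sub_mul_of_transpose_mul_self [Fintype m] [DecidableEq m]
    {X : Matrix n m R} (hX : Xᵀ * X = 1) (Y : Matrix n m R) (G : Matrix m m R) :
    Xᵀ * (Y - X * G) = Xᵀ * Y - G := by
  rw [Matrix.mul_sub, ← Matrix.mul_assoc, hX, Matrix.one_mul]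

theorem discreteNeumann_cotangent_and_momentum [Fintype m] [DecidableEq m] {B : Matrix n n R}
    (hB : Bᵀ = B) {X Xt : Matrix n m R} (hX : Xᵀ * X = 1) (hXt : Xtᵀ * Xt = 1)
    {Γ : Matrix m m R} (hΓ : Γᵀ = Γ) (hΓS : Γ + Γ = Xᵀ * B * Xt + Xtᵀ * B * X)
    {P Pt : Matrix n m R} (hP : P = B * Xt - X * Γ) (hPt : Pt = -(B * X) + Xt * Γ) :
    Xᵀ * P + Pᵀ * X = 0 ∧ Xtᵀ * Pt + Ptᵀ * Xt = 0 ∧ Xtᵀ * Pt = Xᵀ * P := by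
  have hXP : Xᵀ * P = Xᵀ * B * Xt - Γ := by
    rw [hP, transpose_mul_sub_mul_of_transpose_mul_self hX, Matrix.mul_assoc]
  have hXtPt : Xtᵀ * Pt = -(Xtᵀ * B * X - Γ) := by
    rw [hPt, neg_add_eq_sub, ← neg_sub, Matrix.mul_neg,
      transpose_mul_sub_mul_of_transpose_mul_self hXt, Matrix.mul_assoc]
  have hmomentum : Xtᵀ * Pt = Xᵀ * P := by
    rw [hXtPt, hXP, neg_sub, sub_eq_sub_iff_add_eq_add, hΓS]
  have hcotangent : Xᵀ * P + Pᵀ * X = 0 := by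
    rw [transpose_mul_add_transpose_mul, hXP, transpose_sub,
      transpose_mul_mul_transpose_of_symm hB, hΓ, sub_add_sub_comm, ← hΓS, sub_self]
  refine ⟨hcotangent, ?_, hmomentum⟩
  rw [transpose_mul_add_transpose_mul, hmomentum, ← transpose_mul_add_transpose_mul, hcotangent]

end Matrix

theorem stmt_11_general {n r : ℕ} (a : Fin n → ℝ) (lams : ℝ)
    (B : Matrix (Fin n) (Fin n) ℝ)
    (hB : B = Matrix.diagonal fun i => Real.sqrt (lams - a i))
    (X Xt : Matrix (Fin n) (Fin r) ℝ) (hX : Xᵀ * X = 1) (hXt : Xtᵀ * Xt = 1)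
    (Γ : Matrix (Fin r) (Fin r) ℝ)
    (hΓ : Γ = (1 / 2 : ℝ) • (Xtᵀ * B * X + Xᵀ * B * Xt))
    (P Pt : Matrix (Fin n) (Fin r) ℝ)
    (hP : P = B * Xt - X * Γ) (hPt : Pt = -(B * X) + Xt * Γ) :
    Xᵀ * P + Pᵀ * X = 0 ∧
      Xtᵀ * Pt + Ptᵀ * Xt = 0 ∧
      Xtᵀ * Pt = Xᵀ * P := by
  have hBt : Bᵀ = B := hB ▸ diagonal_transpose _
  have hΓt : Γᵀ = Γ := by
    rw [hΓ, transpose_smul, transpose_add, transpose_mul_mul_transpose_of_symm hBt,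
      transpose_mul_mul_transpose_of_symm hBt, add_comm]
  have hΓS : Γ + Γ = Xᵀ * B * Xt + Xtᵀ * B * X := by
    rw [hΓ, ← two_smul ℝ, smul_smul, add_comm]
    norm_num
  exact discreteNeumann_cotangent_and_momentum hBt hX hXt hΓt hΓS hP hPt

/-- The discrete Neumann map on the Stiefel variety stays on the cotangent
bundle `T*V_{n,r}` and preserves the SO(r)-momentum: `XᵀP + PᵀX = 0`,
`X̃ᵀP̃ + P̃ᵀX̃ = 0` and `X̃ᵀP̃ = XᵀP`. -/
theorem stmt_11 {n r : ℕ} (a : Fin n → ℝ) (lams : ℝ) (hlams : ∀ i, a i < lams)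
    (B : Matrix (Fin n) (Fin n) ℝ)
    (hB : B = Matrix.diagonal fun i => Real.sqrt (lams - a i))
    (X Xt : Matrix (Fin n) (Fin r) ℝ) (hX : Xᵀ * X = 1) (hXt : Xtᵀ * Xt = 1)
    (Γ : Matrix (Fin r) (Fin r) ℝ)
    (hΓ : Γ = (1 / 2 : ℝ) • (Xtᵀ * B * X + Xᵀ * B * Xt))
    (P Pt : Matrix (Fin n) (Fin r) ℝ)
    (hP : P = B * Xt - X * Γ) (hPt : Pt = -(B * X) + Xt * Γ) :
    Xᵀ * P + Pᵀ * X = 0 ∧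
      Xtᵀ * Pt + Ptᵀ * Xt = 0 ∧
      Xtᵀ * Pt = Xᵀ * P :=
  stmt_11_general a lams B hB X Xt hX hXt Γ hΓ P Pt hP hPt
end

section
/- Let J be an n×n real symmetric positive definite matrix with positive square root J^{1/2}. Suppose (X_k), k ∈ ℤ, is a sequence of real n×r matrices with X_k^T X_k = I_r, and (B_k) is a sequence of r×r matrices such that X_{k−1} + X_{k+1} = J^{−1/2} X_k B_k for all k. Define x_k = (−1)^k J^{1/2} X_{2k}, y_k = (−1)^k X_{2k−1}, Δ_k = B_{2k+1}, Ω_k = −B_{2k}. Then x_k^T J^{−1} x_k = I_r, y_k^T y_k = I_r, and the modified billiard equations hold: x_{k+1} − x_k = y_{k+1} Δ_k and y_{k+1} − y_k = J^{−1} x_k Ω_k for all k. -/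
/-!
Because of the alternating sign, the difference of two consecutive terms of `x` (resp. `y`) is
`∓ J^{1/2}` (resp. `∓`) times the sum `X_{m-1} + X_{m+1}` at an odd (resp. even) index `m`, which
the discrete Euler–Lagrange equation evaluates. The constraints follow from
`J^{1/2} J⁻¹ J^{1/2} = I` and `((-1)^k)² = 1`.
-/

open Matrix

section Signs

variable {K : Type*} [Field K]

theorem neg_one_zpow_mul_self (k : ℤ) : (-1 : K) ^ k * (-1) ^ k = 1 := by
  rw [← mul_zpow, neg_one_mul, neg_neg, _root_.one_zpow]

theorem neg_one_zpow_add_one (k : ℤ) : (-1 : K) ^ (k + 1) = -(-1) ^ k := by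
  rw [zpow_add_one₀ (neg_ne_zero.mpr one_ne_zero), mul_neg_one]

theorem neg_one_zpow_add_one_smul_sub {M : Type*} [AddCommGroup M] [Module K M] (k : ℤ)
    (a b : M) : (-1 : K) ^ (k + 1) • b - (-1 : K) ^ k • a = -((-1 : K) ^ k • (a + b)) := by
  rw [neg_one_zpow_add_one, neg_smul, smul_add]
  abel

end Signs

section Matrices

variable {R : Type*} [CommRing R] {m n : Type*} [Fintype n]

theorem transpose_smul_mul_mul_smul {ε : R} (hε : ε * ε = 1) (A : Matrix n m R)
    (M : Matrix n n R) : (ε • A)ᵀ * M * (ε • A) = Aᵀ * M * A := by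
  rw [transpose_smul, Matrix.smul_mul, Matrix.smul_mul, Matrix.mul_smul, smul_smul, hε, one_smul]

theorem transpose_mul_inv_mul_self_mul [DecidableEq n] {S : Matrix n n R} (hS : Sᵀ = S)
    (hdet : IsUnit S.det) (X : Matrix n m R) : (S * X)ᵀ * (S * S)⁻¹ * (S * X) = Xᵀ * X := by
  rw [transpose_mul, hS, Matrix.mul_inv_rev]
  simp only [Matrix.mul_assoc, nonsing_inv_mul_cancel_left _ _ hdet,
    mul_nonsing_inv_cancel_left _ _ hdet]

end Matrices

theorem stmt_15_general {n r : ℕ} (J S : Matrix (Fin n) (Fin n) ℝ)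
    (hSpd : S.PosDef) (hSS : S * S = J)
    (X : ℤ → Matrix (Fin n) (Fin r) ℝ) (B : ℤ → Matrix (Fin r) (Fin r) ℝ)
    (hX : ∀ k, (X k)ᵀ * X k = 1)
    (hEL : ∀ k, X (k - 1) + X (k + 1) = S⁻¹ * X k * B k)
    (x y : ℤ → Matrix (Fin n) (Fin r) ℝ)
    (Δ Ω : ℤ → Matrix (Fin r) (Fin r) ℝ)
    (hx : ∀ k, x k = ((-1 : ℝ) ^ k) • (S * X (2 * k)))
    (hy : ∀ k, y k = ((-1 : ℝ) ^ k) • X (2 * k - 1))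
    (hΔ : ∀ k, Δ k = B (2 * k + 1)) (hΩ : ∀ k, Ω k = -B (2 * k)) :
    (∀ k, (x k)ᵀ * J⁻¹ * x k = 1) ∧
      (∀ k, (y k)ᵀ * y k = 1) ∧
      (∀ k, x (k + 1) - x k = y (k + 1) * Δ k) ∧
      (∀ k, y (k + 1) - y k = J⁻¹ * x k * Ω k) := by
  have hSt : Sᵀ = S := hSpd.isHermitian.eq
  have hdet : IsUnit S.det := isUnit_iff_ne_zero.mpr hSpd.det_pos.ne'
  subst hSS
  refine ⟨fun k => ?_, fun k => ?_, fun k => ?_, fun k => ?_⟩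
  · rw [hx, transpose_smul_mul_mul_smul (neg_one_zpow_mul_self k),
      transpose_mul_inv_mul_self_mul hSt hdet, hX]
  · have h := transpose_smul_mul_mul_smul (neg_one_zpow_mul_self k) (X (2 * k - 1)) 1
    rwa [Matrix.mul_one, Matrix.mul_one, ← hy, hX] at h
  · have hE : X (2 * k) + X (2 * (k + 1)) = S⁻¹ * X (2 * k + 1) * B (2 * k + 1) := by
      convert hEL (2 * k + 1) using 3 <;> ring
    rw [hx, hx, hy, hΔ, neg_one_zpow_add_one_smul_sub, ← Matrix.mul_add, hE,
      show 2 * (k + 1) - 1 = 2 * k + 1 by ring, neg_one_zpow_add_one, ← Matrix.mul_assoc,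
      ← Matrix.mul_assoc, mul_nonsing_inv S hdet, Matrix.one_mul, neg_smul, Matrix.neg_mul,
      smul_mul]
  · have hE : X (2 * k - 1) + X (2 * (k + 1) - 1) = S⁻¹ * X (2 * k) * B (2 * k) := by
      convert hEL (2 * k) using 3
      ring
    rw [hy, hy, hx, hΩ, neg_one_zpow_add_one_smul_sub, hE, Matrix.mul_inv_rev]
    simp [Matrix.mul_assoc, nonsing_inv_mul_cancel_left _ _ hdet]

/-- The modified billiard map on the Stiefel variety is a reformulation of the
discrete Neumann system: if `X_{k−1} + X_{k+1} = J^{−1/2} X_k B_k` on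
`V_{n,r}`, then `x_k = (−1)^k J^{1/2} X_{2k}`, `y_k = (−1)^k X_{2k−1}`,
`Δ_k = B_{2k+1}`, `Ω_k = −B_{2k}` satisfy `x_kᵀ J⁻¹ x_k = I`, `y_kᵀ y_k = I`,
`x_{k+1} − x_k = y_{k+1} Δ_k` and `y_{k+1} − y_k = J⁻¹ x_k Ω_k`. -/
theorem stmt_15 {n r : ℕ} (J S : Matrix (Fin n) (Fin n) ℝ)
    (hJpd : J.PosDef) (hSpd : S.PosDef) (hSS : S * S = J)
    (X : ℤ → Matrix (Fin n) (Fin r) ℝ) (B : ℤ → Matrix (Fin r) (Fin r) ℝ)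
    (hX : ∀ k, (X k)ᵀ * X k = 1)
    (hEL : ∀ k, X (k - 1) + X (k + 1) = S⁻¹ * X k * B k)
    (x y : ℤ → Matrix (Fin n) (Fin r) ℝ)
    (Δ Ω : ℤ → Matrix (Fin r) (Fin r) ℝ)
    (hx : ∀ k, x k = ((-1 : ℝ) ^ k) • (S * X (2 * k)))
    (hy : ∀ k, y k = ((-1 : ℝ) ^ k) • X (2 * k - 1))
    (hΔ : ∀ k, Δ k = B (2 * k + 1)) (hΩ : ∀ k, Ω k = -B (2 * k)) :
    (∀ k, (x k)ᵀ * J⁻¹ * x k = 1) ∧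
      (∀ k, (y k)ᵀ * y k = 1) ∧
      (∀ k, x (k + 1) - x k = y (k + 1) * Δ k) ∧
      (∀ k, y (k + 1) - y k = J⁻¹ * x k * Ω k) :=
  stmt_15_general J S hSpd hSS X B hX hEL x y Δ Ω hx hy hΔ hΩ
end

section
/- Let A = diag(a_1,…,a_n) be a real diagonal matrix and q, p ∈ ℝ^n with ⟨q, q⟩ = 1. Set 𝔲 = ⟨q, Aq⟩ − 2⟨p, q⟩, let α be a real number with α ≠ 0 and α² = ⟨Aq − 𝔲q − p, Aq − 𝔲q − p⟩, and define q̃ = (Aq − 𝔲q − p)/α and p̃ = α q. Then ⟨q̃, q̃⟩ = 1 and ⟨p̃, q̃⟩ = ⟨p, q⟩; i.e. the Ragnisco map is well defined on S^{n−1} × ℝ^n and preserves the function ⟨p, q⟩. -/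
open Matrix

section

variable {ι K : Type*} [Fintype ι] [Field K]

theorem inv_smul_dotProduct_inv_smul_self {α : K} (hα : α ≠ 0) {w : ι → K}
    (hw : α ^ 2 = w ⬝ᵥ w) : α⁻¹ • w ⬝ᵥ α⁻¹ • w = 1 := by
  rw [smul_dotProduct, dotProduct_smul, ← hw, smul_eq_mul, smul_eq_mul]
  field_simp

theorem smul_dotProduct_inv_smul {α : K} (hα : α ≠ 0) (v w : ι → K) :
    α • v ⬝ᵥ α⁻¹ • w = v ⬝ᵥ w := by
  rw [smul_dotProduct, dotProduct_smul, smul_eq_mul, smul_eq_mul, ← mul_assoc,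
    mul_inv_cancel₀ hα, one_mul]

theorem dotProduct_sub_smul_sub_eq {q v p : ι → K} (hq : q ⬝ᵥ q = 1) :
    q ⬝ᵥ (v - (q ⬝ᵥ v - 2 * (p ⬝ᵥ q)) • q - p) = p ⬝ᵥ q := by
  rw [dotProduct_sub, dotProduct_sub, dotProduct_smul, smul_eq_mul, hq, mul_one,
    dotProduct_comm q p]
  ring

end

theorem stmt_17_general {n : ℕ}
    (A : Matrix (Fin n) (Fin n) ℝ)
    (q p : Fin n → ℝ) (hq : q ⬝ᵥ q = 1)
    (u α : ℝ) (hu : u = q ⬝ᵥ (A *ᵥ q) - 2 * (p ⬝ᵥ q))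
    (hα : α ≠ 0)
    (hα2 : α ^ 2 = (A *ᵥ q - u • q - p) ⬝ᵥ (A *ᵥ q - u • q - p))
    (qt pt : Fin n → ℝ)
    (hqt : qt = α⁻¹ • (A *ᵥ q - u • q - p))
    (hpt : pt = α • q) :
    qt ⬝ᵥ qt = 1 ∧ pt ⬝ᵥ qt = p ⬝ᵥ q := by
  subst hqt hpt
  refine ⟨inv_smul_dotProduct_inv_smul_self hα hα2, ?_⟩
  rw [smul_dotProduct_inv_smul hα, hu]
  exact dotProduct_sub_smul_sub_eq hq

/-- The Ragnisco map `(q,p) ↦ (q̃,p̃)`, with `q̃ = (Aq − 𝔲q − p)/α`,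
`p̃ = αq`, `𝔲 = ⟨q,Aq⟩ − 2⟨p,q⟩`, `α² = |Aq − 𝔲q − p|²`, is well defined on
`S^{n−1} × ℝⁿ` and preserves `⟨p, q⟩`. -/
theorem stmt_17 {n : ℕ} (a : Fin n → ℝ)
    (A : Matrix (Fin n) (Fin n) ℝ) (hA : A = Matrix.diagonal a)
    (q p : Fin n → ℝ) (hq : q ⬝ᵥ q = 1)
    (u α : ℝ) (hu : u = q ⬝ᵥ (A *ᵥ q) - 2 * (p ⬝ᵥ q))
    (hα : α ≠ 0)
    (hα2 : α ^ 2 = (A *ᵥ q - u • q - p) ⬝ᵥ (A *ᵥ q - u • q - p))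
    (qt pt : Fin n → ℝ)
    (hqt : qt = α⁻¹ • (A *ᵥ q - u • q - p))
    (hpt : pt = α • q) :
    qt ⬝ᵥ qt = 1 ∧ pt ⬝ᵥ qt = p ⬝ᵥ q :=
  stmt_17_general A q p hq u α hu hα hα2 qt pt hqt hpt
end

section
/- Let A = diag(a_1,…,a_n) be a real diagonal matrix with distinct entries, and let q, p ∈ ℝ^n satisfy ⟨q, q⟩ = 1. Set 𝔲 = ⟨q, Aq⟩ − 2⟨p, q⟩, let α ≠ 0 with α² = ⟨Aq − 𝔲q − p, Aq − 𝔲q − p⟩, and define q̃ = (Aq − 𝔲q − p)/α, p̃ = α q. For λ ∉ {a_1,…,a_n} define the 2×2 matrices L_R(λ) = [[1/2 + Σ_i q_i p_i/(λ−a_i), Σ_i q_i²/(λ−a_i)],[−Σ_i p_i²/(λ−a_i), −1/2 − Σ_i q_i p_i/(λ−a_i)]], the matrix L̃_R(λ) given by the same formula with (q, p) replaced by (q̃, p̃), and M_R(λ) = [[0, −1],[α², λ − ⟨q, Aq⟩ + 2⟨p, q⟩]]. Then L_R(λ) M_R(λ) = M_R(λ) L̃_R(λ) for all such λ. -/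
/-!
All three sums in `L_R` are values of the symmetric bilinear form
`G(x, y) = ⟨x, (λ - A)⁻¹ y⟩`. Since `A q - 𝔲 q - p = ((λ - 𝔲) q - p) - (λ - A) q`, the resolvent
cancels against `λ - A` in the new coordinates, so `G(q̃, p̃)` and `α² G(q̃, q̃)` are explicit
polynomials in `λ - 𝔲` with coefficients the entries of `L_R(λ)`; the normalisation `⟨q, q⟩ = 1`
and the definition of `𝔲` absorb the constants. Given these, the intertwining relation is a
`2 × 2` matrix identity.
-/

open Matrix

section ResolventForm

variable {ι K : Type*} [Fintype ι] [Field K]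

def resolventForm (a : ι → K) (lam : K) (x y : ι → K) : K :=
  ∑ i, x i * y i / (lam - a i)

variable (a : ι → K) (lam : K)

theorem resolventForm_comm (x y : ι → K) :
    resolventForm a lam x y = resolventForm a lam y x := by
  simp only [resolventForm, mul_comm (x _)]

theorem resolventForm_self (x : ι → K) :
    resolventForm a lam x x = ∑ i, x i ^ 2 / (lam - a i) := by
  simp only [resolventForm, sq]

theorem resolventForm_sub_left (x x' y : ι → K) :
    resolventForm a lam (x - x') y = resolventForm a lam x y - resolventForm a lam x' y := by
  simp only [resolventForm, ← Finset.sum_sub_distrib, Pi.sub_apply, sub_mul, sub_div]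

theorem resolventForm_smul_left (c : K) (x y : ι → K) :
    resolventForm a lam (c • x) y = c * resolventForm a lam x y := by
  simp only [resolventForm, Finset.mul_sum, Pi.smul_apply, smul_eq_mul, mul_assoc, mul_div_assoc]

theorem resolventForm_sub_right (x y y' : ι → K) :
    resolventForm a lam x (y - y') = resolventForm a lam x y - resolventForm a lam x y' := by
  rw [resolventForm_comm, resolventForm_sub_left, resolventForm_comm a lam y,
    resolventForm_comm a lam y']

theorem resolventForm_smul_right (c : K) (x y : ι → K) :
    resolventForm a lam x (c • y) = c * resolventForm a lam x y := by
  rw [resolventForm_comm, resolventForm_smul_left, resolventForm_comm]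

theorem resolventForm_sub_resolvent_left (hlam : ∀ i, lam ≠ a i) (w v y : ι → K) :
    resolventForm a lam (w - fun i => (lam - a i) * v i) y = resolventForm a lam w y - v ⬝ᵥ y := by
  rw [resolventForm_sub_left]
  congr 1
  refine Finset.sum_congr rfl fun i _ => ?_
  field_simp [sub_ne_zero.mpr (hlam i)]

end ResolventForm

theorem lax_intertwining {K : Type*} [Field K] [NeZero (2 : K)]
    (F Q P F' Q' P' c s : K) (hP : P' = c * Q) (hF : F' = s * Q - F - 1)
    (hQ : c * Q' = s ^ 2 * Q - 2 * s * F + P - s) :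
    !![1 / 2 + F, Q; -P, -(1 / 2) - F] * !![0, -1; c, s] =
      !![0, -1; c, s] * !![1 / 2 + F', Q'; -P', -(1 / 2) - F'] := by
  rw [mul_fin_two, mul_fin_two]
  ext i j
  fin_cases i <;> fin_cases j <;>
    simp only [of_apply, cons_val', cons_val_zero, cons_val_one, cons_val_fin_one, Fin.zero_eta,
      Fin.mk_one, Fin.isValue] <;>
    field_simp
  · linear_combination -2 * hP
  · linear_combination -2 * hF
  · linear_combination -2 * c * hF + 2 * s * hP
  · linear_combination -2 * hQ + 2 * s * hF

section RagniscoStep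

variable {ι K : Type*} [Fintype ι] [DecidableEq ι] [Field K] {a : ι → K} {lam : K}

theorem diagonal_mulVec_sub_smul_sub (lam u : K) (q p : ι → K) :
    diagonal a *ᵥ q - u • q - p = ((lam - u) • q - p) - fun i => (lam - a i) * q i := by
  ext i
  simp only [Pi.sub_apply, Pi.smul_apply, mulVec_diagonal, smul_eq_mul]
  ring

theorem resolventForm_ragniscoStep_left (hlam : ∀ i, lam ≠ a i) {q : ι → K} (hq : q ⬝ᵥ q = 1)
    (u : K) (p : ι → K) :
    resolventForm a lam (diagonal a *ᵥ q - u • q - p) q =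
      (lam - u) * resolventForm a lam q q - resolventForm a lam q p - 1 := by
  rw [diagonal_mulVec_sub_smul_sub lam, resolventForm_sub_resolvent_left a lam hlam,
    resolventForm_sub_left, resolventForm_smul_left, resolventForm_comm a lam p, hq]

theorem resolventForm_ragniscoStep_self (hlam : ∀ i, lam ≠ a i) {q : ι → K} (hq : q ⬝ᵥ q = 1)
    {u : K} {p : ι → K} (hu : u = q ⬝ᵥ (diagonal a *ᵥ q) - 2 * (p ⬝ᵥ q)) :
    resolventForm a lam (diagonal a *ᵥ q - u • q - p) (diagonal a *ᵥ q - u • q - p) =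
      (lam - u) ^ 2 * resolventForm a lam q q - 2 * (lam - u) * resolventForm a lam q p +
        resolventForm a lam p p - (lam - u) := by
  set r := diagonal a *ᵥ q - u • q - p with hr_def
  set w := (lam - u) • q - p
  have hr : ∀ y, resolventForm a lam r y = resolventForm a lam w y - q ⬝ᵥ y := fun y => by
    rw [hr_def, diagonal_mulVec_sub_smul_sub lam, resolventForm_sub_resolvent_left a lam hlam]
  have hqr : q ⬝ᵥ r = q ⬝ᵥ (diagonal a *ᵥ q) - u - p ⬝ᵥ q := by
    simp only [r, dotProduct_sub, dotProduct_smul, hq, smul_eq_mul, mul_one, dotProduct_comm q p]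
  rw [hr, resolventForm_comm, hr, hqr]
  simp only [w, resolventForm_sub_left, resolventForm_sub_right, resolventForm_smul_left,
    resolventForm_smul_right, dotProduct_sub, dotProduct_smul, hq, smul_eq_mul,
    resolventForm_comm a lam p q, dotProduct_comm q p]
  rw [hu]
  ring

end RagniscoStep

theorem stmt_18_general {n : ℕ} (a : Fin n → ℝ)
    (A : Matrix (Fin n) (Fin n) ℝ) (hA : A = Matrix.diagonal a)
    (q p : Fin n → ℝ) (hq : q ⬝ᵥ q = 1)
    (u α : ℝ) (hu : u = q ⬝ᵥ (A *ᵥ q) - 2 * (p ⬝ᵥ q))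
    (hα : α ≠ 0)
    (qt pt : Fin n → ℝ)
    (hqt : qt = α⁻¹ • (A *ᵥ q - u • q - p))
    (hpt : pt = α • q)
    (LR : (Fin n → ℝ) → (Fin n → ℝ) → ℝ → Matrix (Fin 2) (Fin 2) ℝ)
    (hLR : ∀ (x y : Fin n → ℝ) (lam : ℝ),
      LR x y lam =
        !![1 / 2 + ∑ i, x i * y i / (lam - a i), ∑ i, x i ^ 2 / (lam - a i);
           -∑ i, y i ^ 2 / (lam - a i), -(1 / 2) - ∑ i, x i * y i / (lam - a i)])
    (MR : ℝ → Matrix (Fin 2) (Fin 2) ℝ)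
    (hMR : ∀ lam : ℝ,
      MR lam = !![0, -1; α ^ 2, lam - q ⬝ᵥ (A *ᵥ q) + 2 * (p ⬝ᵥ q)]) :
    ∀ lam : ℝ, (∀ i, lam ≠ a i) →
      LR q p lam * MR lam = MR lam * LR qt pt lam := by
  intro lam hlam
  subst hA hqt hpt
  have hL : ∀ x y, LR x y lam = !![1 / 2 + resolventForm a lam x y, resolventForm a lam x x;
      -resolventForm a lam y y, -(1 / 2) - resolventForm a lam x y] := fun x y => by
    rw [hLR, resolventForm_self, resolventForm_self, resolventForm]
  have hs : lam - q ⬝ᵥ (diagonal a *ᵥ q) + 2 * (p ⬝ᵥ q) = lam - u := by rw [hu]; ring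
  rw [hL, hL, hMR, hs]
  apply lax_intertwining
  · rw [resolventForm_smul_left, resolventForm_smul_right]; ring
  · rw [resolventForm_smul_left, resolventForm_smul_right,
      resolventForm_ragniscoStep_left hlam hq, inv_mul_cancel_left₀ hα]
  · rw [resolventForm_smul_left, resolventForm_smul_right,
      resolventForm_ragniscoStep_self hlam hq hu]
    field_simp

/-- Discrete Lax representation of the Ragnisco discretization of the Neumann
system: `L_R(λ) M_R(λ) = M_R(λ) L̃_R(λ)` for all `λ ∉ {a_1,…,a_n}`. -/
theorem stmt_18 {n : ℕ} (a : Fin n → ℝ) (ha : Function.Injective a)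
    (A : Matrix (Fin n) (Fin n) ℝ) (hA : A = Matrix.diagonal a)
    (q p : Fin n → ℝ) (hq : q ⬝ᵥ q = 1)
    (u α : ℝ) (hu : u = q ⬝ᵥ (A *ᵥ q) - 2 * (p ⬝ᵥ q))
    (hα : α ≠ 0)
    (hα2 : α ^ 2 = (A *ᵥ q - u • q - p) ⬝ᵥ (A *ᵥ q - u • q - p))
    (qt pt : Fin n → ℝ)
    (hqt : qt = α⁻¹ • (A *ᵥ q - u • q - p))
    (hpt : pt = α • q)
    (LR : (Fin n → ℝ) → (Fin n → ℝ) → ℝ → Matrix (Fin 2) (Fin 2) ℝ)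
    (hLR : ∀ (x y : Fin n → ℝ) (lam : ℝ),
      LR x y lam =
        !![1 / 2 + ∑ i, x i * y i / (lam - a i), ∑ i, x i ^ 2 / (lam - a i);
           -∑ i, y i ^ 2 / (lam - a i), -(1 / 2) - ∑ i, x i * y i / (lam - a i)])
    (MR : ℝ → Matrix (Fin 2) (Fin 2) ℝ)
    (hMR : ∀ lam : ℝ,
      MR lam = !![0, -1; α ^ 2, lam - q ⬝ᵥ (A *ᵥ q) + 2 * (p ⬝ᵥ q)]) :
    ∀ lam : ℝ, (∀ i, lam ≠ a i) →
      LR q p lam * MR lam = MR lam * LR qt pt lam :=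
  stmt_18_general a A hA q p hq u α hu hα qt pt hqt hpt LR hLR MR hMR
end

section
/- Let A = diag(a_1,…,a_n) be a real diagonal matrix, λ* ∈ ℝ with λ* > a_i for all i, and B = diag(√(λ*−a_1),…,√(λ*−a_n)). Suppose (X_k), k ∈ ℤ, is a sequence of real n×r matrices with X_k^T X_k = I_r, (Γ_k) is the sequence of symmetric multipliers Γ_k = ½(X_{k+1}^T B X_k + X_k^T B X_{k+1}), and the momenta P_k satisfy both P_k = B X_{k+1} − X_k Γ_k and P_k = −B X_{k−1} + X_k Γ_{k−1} for all k. Then the discrete Euler–Lagrange equations hold: X_{k−1} + X_{k+1} = B^{−1} X_k B_k with B_k = Γ_{k−1} + Γ_k; moreover B_k satisfies the matrix equation B_k (X_k^T B^{−2} X_k) B_k − (X_{k−1}^T B^{−1} X_k) B_k − B_k (X_k^T B^{−1} X_{k−1}) = 0, which determines B_k from X_{k−1} and X_k alone. -/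
/-!
Equating the two discrete Legendre transformations eliminates `P_k` and gives
`B (X_{k-1} + X_{k+1}) = X_k B_k`. Solving this for `X_{k+1}` and substituting into
`X_{k+1}ᵀ X_{k+1} - X_{k-1}ᵀ X_{k-1} = I - I = 0` yields the quadratic equation for `B_k`;
the expansion only needs `B` and the `Γ_k` to be symmetric.
-/

open Matrix

variable {m n r R : Type*} [Fintype n] [CommRing R]

lemma isUnit_diagonal_sqrt_sub [DecidableEq n] {a : n → ℝ} {c : ℝ} (h : ∀ i, a i < c) :
    IsUnit (diagonal fun i => √(c - a i)) :=
  isUnit_diagonal.mpr <| Pi.isUnit_iff.mpr fun i =>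
    (Real.sqrt_pos.mpr (sub_pos.mpr (h i))).ne'.isUnit

lemma isSymm_smul_mul_add_mul {B : Matrix n n R} (hB : B.IsSymm) (c : R)
    (X Y : Matrix n r R) : (c • (Yᵀ * B * X + Xᵀ * B * Y)).IsSymm := by
  simp only [IsSymm, transpose_smul, transpose_add, transpose_mul, transpose_transpose,
    hB.eq, Matrix.mul_assoc, add_comm]

lemma mul_add_eq_of_legendre [Fintype m] {B : Matrix n n R} {Xprev X Xnext : Matrix n m R}
    {Γprev Γ : Matrix m m R} {P : Matrix n m R}
    (h₁ : P = B * Xnext - X * Γ) (h₂ : P = -(B * Xprev) + X * Γprev) :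
    B * (Xprev + Xnext) = X * (Γprev + Γ) := by
  have hnext : B * Xnext = -(B * Xprev) + X * Γprev + X * Γ :=
    sub_eq_iff_eq_add.mp (h₁.symm.trans h₂)
  rw [Matrix.mul_add, Matrix.mul_add, hnext]
  abel

lemma transpose_mul_self_sub_of_eq_sub [Fintype m] {C : Matrix n n R} (hC : C.IsSymm)
    {M : Matrix m m R} (hM : M.IsSymm) {Xprev X Xnext : Matrix n m R}
    (h : Xnext = C * X * M - Xprev) :
    Xnextᵀ * Xnext - Xprevᵀ * Xprev =
      M * (Xᵀ * (C * C) * X) * M - Xprevᵀ * C * X * M - M * (Xᵀ * C * Xprev) := by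
  subst h
  simp only [transpose_sub, transpose_mul, hC.eq, hM.eq, Matrix.sub_mul, Matrix.mul_sub,
    Matrix.mul_assoc]
  abel

/-- The discrete Neumann system on the Stiefel variety satisfies the
Moser–Veselov discrete Euler–Lagrange equations
`X_{k−1} + X_{k+1} = B⁻¹ X_k B_k` with `B_k = Γ_{k−1} + Γ_k`, and `B_k`
satisfies a matrix equation determined by `X_{k−1}` and `X_k` alone. -/
theorem stmt_19 {n r : ℕ} (a : Fin n → ℝ) (lams : ℝ) (hlams : ∀ i, a i < lams)
    (B : Matrix (Fin n) (Fin n) ℝ)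
    (hB : B = Matrix.diagonal fun i => Real.sqrt (lams - a i))
    (X P : ℤ → Matrix (Fin n) (Fin r) ℝ)
    (Γ : ℤ → Matrix (Fin r) (Fin r) ℝ)
    (hX : ∀ k, (X k)ᵀ * X k = 1)
    (hΓ : ∀ k, Γ k =
      (1 / 2 : ℝ) • ((X (k + 1))ᵀ * B * X k + (X k)ᵀ * B * X (k + 1)))
    (hP1 : ∀ k, P k = B * X (k + 1) - X k * Γ k)
    (hP2 : ∀ k, P k = -(B * X (k - 1)) + X k * Γ (k - 1)) :
    ∀ k : ℤ,
      X (k - 1) + X (k + 1) = B⁻¹ * X k * (Γ (k - 1) + Γ k) ∧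
      (Γ (k - 1) + Γ k) * ((X k)ᵀ * (B⁻¹ * B⁻¹) * X k) * (Γ (k - 1) + Γ k) -
          ((X (k - 1))ᵀ * B⁻¹ * X k) * (Γ (k - 1) + Γ k) -
          (Γ (k - 1) + Γ k) * ((X k)ᵀ * B⁻¹ * X (k - 1)) = 0 := by
  have hBdet : IsUnit B.det :=
    (isUnit_iff_isUnit_det B).mp (hB ▸ isUnit_diagonal_sqrt_sub hlams)
  have hBsymm : B.IsSymm := hB ▸ isSymm_diagonal _
  have hΓsymm : ∀ k, (Γ k).IsSymm := fun k =>
    hΓ k ▸ isSymm_smul_mul_add_mul hBsymm _ (X k) (X (k + 1))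
  intro k
  have hEL : X (k - 1) + X (k + 1) = B⁻¹ * X k * (Γ (k - 1) + Γ k) := by
    rw [Matrix.mul_assoc, ← mul_add_eq_of_legendre (hP1 k) (hP2 k),
      nonsing_inv_mul_cancel_left B _ hBdet]
  refine ⟨hEL, ?_⟩
  rw [← transpose_mul_self_sub_of_eq_sub hBsymm.inv ((hΓsymm _).add (hΓsymm k))
    (eq_sub_of_add_eq' hEL), hX, hX, sub_self]
end
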